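/- arXiv:1110.5305 — 4 statements merged into one kernel-verified Lean document; each statement's English description precedes it below -/
import Mathlib

section
/- Let A be an n×n real PSD matrix and S any n×ℓ real matrix. With C = A S and W = Sᵗ A S, the Nyström extension satisfies the identity C W† Cᵗ = A^{1/2} P_{A^{1/2} S} A^{1/2}, where P_{A^{1/2} S} is the orthogonal projection onto the column space of A^{1/2} S. -/
open Matrix
open scoped Matrix.Norms.L2Operator

open scoped ComplexOrder in
/-- The positive semidefinite square root of a positive semidefinite matrix
(restored: `Matrix.PosSemidef.sqrt` was removed from Mathlib; same definition as before). -/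
noncomputable def Matrix.PosSemidef.sqrt {n 𝕜 : Type*} [Fintype n] [DecidableEq n] [RCLike 𝕜]
    {A : Matrix n n 𝕜} (hA : A.PosSemidef) : Matrix n n 𝕜 :=
  (hA.1.eigenvectorUnitary : Matrix n n 𝕜) *
    diagonal (fun i => ((√(hA.1.eigenvalues i) : ℝ) : 𝕜)) *
    (star hA.1.eigenvectorUnitary : Matrix n n 𝕜)

open scoped Classical in
/-- Moore–Penrose pseudoinverse, defined via the four Penrose conditions. -/
noncomputable def pinv {m n : Type*} [Fintype m] [Fintype n] (M : Matrix m n ℝ) :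
    Matrix n m ℝ :=
  if h : ∃ X : Matrix n m ℝ,
      M * X * M = M ∧ X * M * X = X ∧ (M * X)ᵀ = M * X ∧ (X * M)ᵀ = X * M
  then h.choose else 0

open scoped Classical in
/-- `eigvalsDesc A i` is the `(i+1)`-st largest eigenvalue of `A` (0-based index `i`);
junk value `0` if `A` is not Hermitian or `i` is out of range. -/
noncomputable def eigvalsDesc {n : ℕ} (A : Matrix (Fin n) (Fin n) ℝ) (i : ℕ) : ℝ :=
  if h : A.IsHermitian ∧ i < n then
    h.1.eigenvalues (Tuple.sort h.1.eigenvalues (Fin.rev ⟨i, h.2⟩))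
  else 0

/-- The coherence of an `n × k` matrix: `(n/k)` times the maximal squared row norm. -/
noncomputable def coherence {n k : ℕ} (U : Matrix (Fin n) (Fin k) ℝ) : ℝ :=
  ((n : ℝ) / k) * ⨆ i : Fin n, ∑ j : Fin k, (U i j) ^ 2

/-- The `n × ℓ` matrix consisting of the first `ℓ` columns of the permutation matrix of `σ`
(column `j` is the standard basis vector `e_{σ j}`). -/
def sampleMatrix {n ℓ : ℕ} (hl : ℓ ≤ n) (σ : Equiv.Perm (Fin n)) :
    Matrix (Fin n) (Fin ℓ) ℝ :=
  Matrix.of fun i j => if σ (Fin.castLE hl j) = i then (1 : ℝ) else 0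

/-!
Write `R = A^{1/2}` and `B = R S`. Since `R` is symmetric with `R R = A`, we have `C = R B` and
`W = Bᵀ B`, so the theorem reduces to `B† = (Bᵀ B)† Bᵀ`. If `X` satisfies the Penrose conditions
for `Bᵀ B` then `X Bᵀ` satisfies them for `B`; the crucial one, `B X Bᵀ B = B`, comes from
cancelling `Bᵀ B` on the left, which is possible because `Bᵀ B` and `B` have the same kernel.
-/

section Pinv

variable {m n : Type*} [Fintype m] [Fintype n]

def IsPinv (M : Matrix m n ℝ) (X : Matrix n m ℝ) : Prop :=
  M * X * M = M ∧ X * M * X = X ∧ (M * X)ᵀ = M * X ∧ (X * M)ᵀ = X * M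

theorem IsPinv.unique {M : Matrix m n ℝ} {X Y : Matrix n m ℝ}
    (hX : IsPinv M X) (hY : IsPinv M Y) : X = Y := by
  obtain ⟨hX₁, hX₂, hX₃, hX₄⟩ := hX
  obtain ⟨hY₁, hY₂, hY₃, hY₄⟩ := hY
  have hMX : M * X = M * Y :=
    calc M * X = (M * X)ᵀ := hX₃.symm
    _ = (M * Y * M * X)ᵀ := by rw [hY₁]
    _ = (M * X)ᵀ * (M * Y)ᵀ := by simp only [transpose_mul, Matrix.mul_assoc]
    _ = M * X * M * Y := by rw [hX₃, hY₃, Matrix.mul_assoc (M * X)]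
    _ = M * Y := by rw [hX₁]
  have hXM : X * M = Y * M :=
    calc X * M = (X * M)ᵀ := hX₄.symm
    _ = (X * (M * Y * M))ᵀ := by rw [hY₁]
    _ = (Y * M)ᵀ * (X * M)ᵀ := by simp only [transpose_mul, Matrix.mul_assoc]
    _ = Y * M := by rw [hX₄, hY₄, Matrix.mul_assoc Y, ← Matrix.mul_assoc M, hX₁]
  calc X = X * M * X := hX₂.symm
  _ = Y * M * Y := by rw [hXM, Matrix.mul_assoc, hMX, ← Matrix.mul_assoc]
  _ = Y := hY₂

theorem IsPinv.transpose {M : Matrix m n ℝ} {X : Matrix n m ℝ} (h : IsPinv M X) :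
    IsPinv Mᵀ Xᵀ := by
  obtain ⟨h₁, h₂, h₃, h₄⟩ := h
  refine ⟨?_, ?_, ?_, ?_⟩
  · rw [← transpose_mul, ← transpose_mul, ← Matrix.mul_assoc, h₁]
  · rw [← transpose_mul, ← transpose_mul, ← Matrix.mul_assoc, h₂]
  · rw [← transpose_mul, transpose_transpose, h₄]
  · rw [← transpose_mul, transpose_transpose, h₃]

theorem IsPinv.transpose_eq_self {M X : Matrix n n ℝ} (hM : Mᵀ = M) (h : IsPinv M X) :
    Xᵀ = X :=
  (hM ▸ h.transpose).unique h

theorem IsPinv.pinv_eq {M : Matrix m n ℝ} {X : Matrix n m ℝ} (h : IsPinv M X) : pinv M = X := by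
  have hex : ∃ X, IsPinv M X := ⟨X, h⟩
  unfold IsPinv at hex
  rw [pinv, dif_pos hex]
  exact IsPinv.unique hex.choose_spec h

theorem pinv_eq_zero {M : Matrix m n ℝ} (h : ∀ X, ¬ IsPinv M X) : pinv M = 0 := by
  unfold IsPinv at h
  rw [pinv, dif_neg (not_exists.mpr h)]

theorem mul_eq_mul_of_transpose_mul_self_mul_eq {p : Type*} {B : Matrix m n ℝ}
    {Y Z : Matrix n p ℝ} (h : Bᵀ * B * Y = Bᵀ * B * Z) : B * Y = B * Z := by
  rw [← sub_eq_zero, ← Matrix.mul_sub, ← conjTranspose_eq_transpose_of_trivial,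
    conjTranspose_mul_self_mul_eq_zero] at h
  rwa [← sub_eq_zero, ← Matrix.mul_sub]

theorem IsPinv.of_transpose_mul_self {B : Matrix m n ℝ} {X : Matrix n n ℝ}
    (h : IsPinv (Bᵀ * B) X) : IsPinv B (X * Bᵀ) := by
  have hX : Xᵀ = X := h.transpose_eq_self (by rw [transpose_mul, transpose_transpose])
  obtain ⟨h₁, h₂, -, h₄⟩ := h
  have hBXB : B * (X * Bᵀ * B) = B := by
    classical
    simpa only [Matrix.mul_one, Matrix.mul_assoc] using
      mul_eq_mul_of_transpose_mul_self_mul_eq (Y := X * (Bᵀ * B)) (Z := 1)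
        (by rw [← Matrix.mul_assoc, h₁, Matrix.mul_one])
  refine ⟨?_, ?_, ?_, ?_⟩
  · rw [Matrix.mul_assoc, hBXB]
  · simpa only [Matrix.mul_assoc] using congrArg (· * Bᵀ) h₂
  · rw [transpose_mul, transpose_mul, hX, transpose_transpose, Matrix.mul_assoc]
  · simpa only [Matrix.mul_assoc] using h₄

theorem IsPinv.transpose_mul_self {B : Matrix m n ℝ} {Z : Matrix n m ℝ} (h : IsPinv B Z) :
    IsPinv (Bᵀ * B) (Z * Zᵀ) := by
  obtain ⟨hBtZtBt, hZtBtZt, -, -⟩ := h.transpose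
  obtain ⟨h₁, h₂, h₃, h₄⟩ := h
  have hBZ : Zᵀ * Bᵀ = B * Z := by rw [← transpose_mul, h₃]
  have hZB : Bᵀ * Zᵀ = Z * B := by rw [← transpose_mul, h₄]
  have hleft : Bᵀ * B * (Z * Zᵀ) = Z * B :=
    calc Bᵀ * B * (Z * Zᵀ) = Bᵀ * (Zᵀ * Bᵀ * Zᵀ) := by rw [hBZ]; simp only [Matrix.mul_assoc]
    _ = Z * B := by rw [hZtBtZt, hZB]
  have hright : Z * Zᵀ * (Bᵀ * B) = Z * B :=
    calc Z * Zᵀ * (Bᵀ * B) = Z * (Zᵀ * Bᵀ) * B := by simp only [Matrix.mul_assoc]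
    _ = Z * B := by rw [hBZ, Matrix.mul_assoc, h₁]
  refine ⟨?_, ?_, ?_, ?_⟩
  · rw [hleft, ← hZB, ← Matrix.mul_assoc, hBtZtBt]
  · rw [hright, ← Matrix.mul_assoc, h₂]
  · rw [hleft, h₄]
  · rw [hright, h₄]

/-- Also in the degenerate case: `B` satisfies the Penrose conditions for some matrix iff
`Bᵀ * B` does, so otherwise both sides are the junk value `0`. -/
theorem pinv_eq_pinv_transpose_mul_self_mul_transpose (B : Matrix m n ℝ) :
    pinv B = pinv (Bᵀ * B) * Bᵀ := by
  by_cases hex : ∃ X, IsPinv (Bᵀ * B) X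
  · obtain ⟨X, hX⟩ := hex
    rw [hX.pinv_eq, hX.of_transpose_mul_self.pinv_eq]
  · have hnone : ∀ Z, ¬ IsPinv B Z := fun Z hZ => hex ⟨_, hZ.transpose_mul_self⟩
    rw [pinv_eq_zero hnone, pinv_eq_zero (not_exists.mp hex), Matrix.zero_mul]

end Pinv

namespace Matrix.PosSemidef

open scoped ComplexOrder

variable {n 𝕜 : Type*} [Fintype n] [DecidableEq n] [RCLike 𝕜] {A : Matrix n n 𝕜}

theorem sqrt_conjTranspose (hA : A.PosSemidef) : hA.sqrtᴴ = hA.sqrt := by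
  simp only [sqrt, conjTranspose_mul, diagonal_conjTranspose, Matrix.mul_assoc,
    star_eq_conjTranspose, conjTranspose_conjTranspose, Pi.star_def, RCLike.star_def,
    RCLike.conj_ofReal]

theorem sqrt_mul_self (hA : A.PosSemidef) : hA.sqrt * hA.sqrt = A := by
  conv_rhs => rw [hA.1.spectral_theorem, Unitary.conjStarAlgAut_apply]
  set U : Matrix n n 𝕜 := (hA.1.eigenvectorUnitary : Matrix n n 𝕜)
  have hU : star U * U = 1 := Unitary.coe_star_mul_self _
  calc hA.sqrt * hA.sqrt
      = U * (diagonal (fun i => ((√(hA.1.eigenvalues i) : ℝ) : 𝕜)) * (star U * U) *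
          diagonal (fun i => ((√(hA.1.eigenvalues i) : ℝ) : 𝕜))) * star U := by
        simp only [sqrt, Matrix.mul_assoc]; rfl
    _ = _ := by
        rw [hU, Matrix.mul_one, diagonal_mul_diagonal]
        congr 3
        funext i
        rw [← RCLike.ofReal_mul, Real.mul_self_sqrt (hA.eigenvalues_nonneg i)]
        rfl

end Matrix.PosSemidef

/-- For a PSD matrix `A` and any sampling matrix `S`, with `C = A S` and
`W = Sᵗ A S`, the Nyström extension satisfies `C W† Cᵗ = A^{1/2} P_{A^{1/2} S} A^{1/2}`,
where `P_{A^{1/2} S} = (A^{1/2} S)(A^{1/2} S)†` is the orthogonal projection onto the column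
space of `A^{1/2} S`. -/
theorem nystrom_eq_sqrt_proj_sqrt {n ℓ : ℕ}
    (A : Matrix (Fin n) (Fin n) ℝ) (hA : A.PosSemidef)
    (S : Matrix (Fin n) (Fin ℓ) ℝ)
    (C : Matrix (Fin n) (Fin ℓ) ℝ) (W : Matrix (Fin ℓ) (Fin ℓ) ℝ)
    (hC : C = A * S) (hW : W = Sᵀ * A * S) :
    C * pinv W * Cᵀ =
      hA.sqrt * ((hA.sqrt * S) * pinv (hA.sqrt * S)) * hA.sqrt := by
  set R := hA.sqrt
  have hRt : Rᵀ = R := by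
    rw [← conjTranspose_eq_transpose_of_trivial, hA.sqrt_conjTranspose]
  have hRR : R * R = A := hA.sqrt_mul_self
  have hC' : C = R * (R * S) := by rw [hC, ← hRR, Matrix.mul_assoc]
  have hW' : W = (R * S)ᵀ * (R * S) := by
    rw [hW, ← hRR, transpose_mul, hRt]
    simp only [Matrix.mul_assoc]
  rw [hC', hW', transpose_mul R (R * S), hRt,
    pinv_eq_pinv_transpose_mul_self_mul_transpose (R * S)]
  simp only [Matrix.mul_assoc]
end

section
/- Let M be an n×n real PSD matrix and fix integers 1 ≤ k ≤ ℓ ≤ n. Let U₁ and U₂ have orthonormal columns spanning respectively a dominant k-dimensional invariant subspace of M and the corresponding bottom (n−k)-dimensional invariant subspace, and let Σ₂ be the diagonal matrix of the n−k smallest eigenvalues of M. Given an n×ℓ matrix S, set Ω₁ = U₁ᵗ S and Ω₂ = U₂ᵗ S. If Ω₁ has full row rank, then ‖(I − P_{M S}) M‖₂² ≤ ‖Σ₂‖₂² + ‖Σ₂ Ω₂ Ω₁†‖₂². -/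
open Matrix
open scoped Matrix.Norms.L2Operator

/-!
Write `P` for the orthogonal projection onto the range of `M S`. Since `(1 - P) M S = 0`, for any
`T` we have `(1 - P) M = (1 - P) (M - M S T U₁ᵀ)`, and `1 - P` is a contraction. Choosing
`T = Ω₁†`, a right inverse of `Ω₁`, the residual `M - M S Ω₁† U₁ᵀ` kills the dominant part of `M`
and equals `U₂ (Σ₂ U₂ᵀ - Σ₂ Ω₂ Ω₁† U₁ᵀ)`. As `U₁` and `U₂` have orthonormal columns spanning
orthogonal subspaces, the squared norm of this is at most `‖Σ₂‖² + ‖Σ₂ Ω₂ Ω₁†‖²`.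
-/

namespace Matrix

section Cfc

variable {n : Type*} [Fintype n] [DecidableEq n]

theorem transpose_cfc (f : ℝ → ℝ) (B : Matrix n n ℝ) : (cfc f B)ᵀ = cfc f B := by
  simpa [IsSelfAdjoint, star_eq_conjTranspose, conjTranspose_eq_transpose_of_trivial] using
    (cfc_predicate f B : IsSelfAdjoint _)

theorem cfc_mul_cfc (f g : ℝ → ℝ) (B : Matrix n n ℝ) :
    cfc f B * cfc g B = cfc (fun x => f x * g x) B :=
  (cfc_mul f g B (B.finite_real_spectrum.continuousOn f)
    (B.finite_real_spectrum.continuousOn g)).symm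

theorem cfc_mul_self {B : Matrix n n ℝ} (hB : IsSelfAdjoint B) (f : ℝ → ℝ) :
    cfc f B * B = cfc (fun x => f x * x) B := by
  have h := cfc_mul_cfc f id B
  rw [cfc_id ℝ B] at h
  exact h

end Cfc

section L2OpNorm

variable {m n p q : Type*} [Fintype m] [Fintype n] [Fintype p] [Fintype q]

theorem l2_opNorm_transpose [DecidableEq m] [DecidableEq n] (A : Matrix m n ℝ) :
    ‖Aᵀ‖ = ‖A‖ := by
  rw [← conjTranspose_eq_transpose_of_trivial, l2_opNorm_conjTranspose]

theorem l2_opNorm_transpose_mul_self [DecidableEq n] (A : Matrix m n ℝ) :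
    ‖Aᵀ * A‖ = ‖A‖ ^ 2 := by
  rw [← conjTranspose_eq_transpose_of_trivial, l2_opNorm_conjTranspose_mul_self, sq]

theorem l2_opNorm_mul_transpose_self [DecidableEq m] [DecidableEq n] (A : Matrix m n ℝ) :
    ‖A * Aᵀ‖ = ‖A‖ ^ 2 := by
  simpa [l2_opNorm_transpose] using l2_opNorm_transpose_mul_self Aᵀ

theorem l2_opNorm_mul_of_transpose_mul_self_eq_one [DecidableEq n] [DecidableEq p]
    {Q : Matrix m n ℝ} (hQ : Qᵀ * Q = 1) (A : Matrix n p ℝ) : ‖Q * A‖ = ‖A‖ := by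
  have h : ‖Q * A‖ ^ 2 = ‖A‖ ^ 2 := by
    rw [← l2_opNorm_transpose_mul_self, ← l2_opNorm_transpose_mul_self, transpose_mul,
      Matrix.mul_assoc, ← Matrix.mul_assoc Qᵀ, hQ, Matrix.one_mul]
  exact (pow_left_inj₀ (norm_nonneg _) (norm_nonneg _) two_ne_zero).mp h

theorem l2_opNorm_one_sub_mul_le [DecidableEq m] [DecidableEq n] {P : Matrix m m ℝ}
    (hP : IsStarProjection P) (A : Matrix m n ℝ) : ‖(1 - P) * A‖ ≤ ‖A‖ :=
  (l2_opNorm_mul _ _).trans <| mul_le_of_le_one_left (norm_nonneg _) hP.one_sub.norm_le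

theorem sq_l2_opNorm_mul_transpose_sub_le [DecidableEq m] [DecidableEq n] [DecidableEq p]
    [DecidableEq q] {X : Matrix n p ℝ} {Y : Matrix n q ℝ}
    (hX : Xᵀ * X = 1) (hY : Yᵀ * Y = 1) (hXY : Xᵀ * Y = 0) (A : Matrix m p ℝ) (B : Matrix m q ℝ) :
    ‖A * Xᵀ - B * Yᵀ‖ ^ 2 ≤ ‖A‖ ^ 2 + ‖B‖ ^ 2 := by
  have hYX : Yᵀ * X = 0 := by simpa using congrArg transpose hXY
  have h : (A * Xᵀ - B * Yᵀ) * (A * Xᵀ - B * Yᵀ)ᵀ = A * Aᵀ + B * Bᵀ := by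
    simp only [transpose_sub, transpose_mul, transpose_transpose, Matrix.sub_mul, Matrix.mul_sub,
      Matrix.mul_assoc, ← Matrix.mul_assoc Xᵀ, ← Matrix.mul_assoc Yᵀ, hX, hY, hXY, hYX,
      Matrix.one_mul, Matrix.zero_mul, Matrix.mul_zero]
    abel
  calc ‖A * Xᵀ - B * Yᵀ‖ ^ 2 = ‖A * Aᵀ + B * Bᵀ‖ := by rw [← h, l2_opNorm_mul_transpose_self]
    _ ≤ ‖A * Aᵀ‖ + ‖B * Bᵀ‖ := norm_add_le _ _
    _ = ‖A‖ ^ 2 + ‖B‖ ^ 2 := by rw [l2_opNorm_mul_transpose_self, l2_opNorm_mul_transpose_self]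

end L2OpNorm

section Partition

variable {n p k l R : Type*} [CommRing R]

theorem transpose_mul_self_fromCols_eq_one_iff [Fintype n] [DecidableEq p] [DecidableEq k]
    (U₁ : Matrix n k R) (U₂ : Matrix n p R) :
    (fromCols U₁ U₂)ᵀ * fromCols U₁ U₂ = 1 ↔
      U₁ᵀ * U₁ = 1 ∧ U₁ᵀ * U₂ = 0 ∧ U₂ᵀ * U₁ = 0 ∧ U₂ᵀ * U₂ = 1 := by
  rw [transpose_fromCols, fromRows_mul_fromCols, ← fromBlocks_one, fromBlocks_inj]

theorem mul_transpose_add_mul_transpose_eq_one [Fintype n] [Fintype p] [Fintype k]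
    [DecidableEq n] [DecidableEq p] [DecidableEq k] (e : n ≃ k ⊕ p) {U₁ : Matrix n k R}
    {U₂ : Matrix n p R} (h : (fromCols U₁ U₂)ᵀ * fromCols U₁ U₂ = 1) :
    U₁ * U₁ᵀ + U₂ * U₂ᵀ = 1 := by
  rw [← fromCols_mul_fromRows, fromCols_mul_fromRows_eq_one_comm e, ← transpose_fromCols, h]

theorem transpose_mul_self_submatrix_eq_one [Fintype n] [Fintype p] [DecidableEq n]
    [DecidableEq p] {U : Matrix n n R} (hU : Uᵀ * U = 1) (e : p ≃ n) :
    (U.submatrix id e)ᵀ * U.submatrix id e = 1 := by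
  rw [transpose_submatrix]
  exact (submatrix_mul_equiv Uᵀ U e (.refl _) e).trans (by rw [hU, submatrix_one_equiv])

theorem mul_submatrix_id_eq_of_mul_eq_mul_diagonal [Fintype n] [Fintype p] [DecidableEq n]
    [DecidableEq p] {M U : Matrix n n R} {D : n → R} (h : M * U = U * diagonal D) (f : p → n) :
    M * U.submatrix id f = U.submatrix id f * diagonal (D ∘ f) := by
  ext i j
  have hij := congrFun (congrFun h i) (f j)
  rw [Matrix.mul_diagonal] at hij ⊢
  simpa [mul_apply] using hij

theorem sub_mul_mul_transpose_eq_of_mul_eq [Fintype n] [Fintype p] [Fintype k] [Fintype l]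
    [DecidableEq n] [DecidableEq k] {M : Matrix n n R} {U₁ : Matrix n k R}
    {U₂ : Matrix n p R} {D₂ : Matrix p p R} (S : Matrix n l R) {T : Matrix l k R}
    (hpart : U₁ * U₁ᵀ + U₂ * U₂ᵀ = 1) (hMU₂ : M * U₂ = U₂ * D₂) (hT : U₁ᵀ * S * T = 1) :
    M - M * S * T * U₁ᵀ = U₂ * (D₂ * U₂ᵀ - D₂ * (U₂ᵀ * S) * T * U₁ᵀ) := by
  have hM : M = M * U₁ * U₁ᵀ + U₂ * D₂ * U₂ᵀ := by
    rw [← hMU₂, Matrix.mul_assoc, Matrix.mul_assoc, ← Matrix.mul_add, hpart, Matrix.mul_one]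
  have hMS : M * S * T * U₁ᵀ = M * U₁ * U₁ᵀ + U₂ * D₂ * (U₂ᵀ * S) * T * U₁ᵀ := by
    calc M * S * T * U₁ᵀ = M * ((U₁ * U₁ᵀ + U₂ * U₂ᵀ) * S) * T * U₁ᵀ := by
          rw [hpart, Matrix.one_mul]
      _ = M * U₁ * (U₁ᵀ * S * T) * U₁ᵀ + M * U₂ * (U₂ᵀ * S) * T * U₁ᵀ := by
          simp only [Matrix.add_mul, Matrix.mul_add, Matrix.mul_assoc]
      _ = _ := by rw [hT, hMU₂, Matrix.mul_one]
  rw [hMS]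
  nth_rewrite 1 [hM]
  simp only [Matrix.mul_sub, Matrix.mul_assoc]
  abel

end Partition

end Matrix

section Pinv

variable {m n : Type*} [Fintype m] [Fintype n]

theorem exists_penrose [DecidableEq n] (A : Matrix m n ℝ) :
    ∃ X : Matrix n m ℝ,
      A * X * A = A ∧ X * A * X = X ∧ (A * X)ᵀ = A * X ∧ (X * A)ᵀ = X * A := by
  set B := Aᵀ * A
  have hB : IsSelfAdjoint B := by
    simp [IsSelfAdjoint, star_eq_conjTranspose, conjTranspose_eq_transpose_of_trivial, B]
  -- `C` inverts `B` on its range and `Q = C B` projects onto that range.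
  set C := cfc (·⁻¹ : ℝ → ℝ) B
  set Q := cfc (fun x : ℝ => x⁻¹ * x) B
  have hCB : C * B = Q := cfc_mul_self hB _
  have hCBC : C * B * C = C := by
    rw [hCB, cfc_mul_cfc]
    exact cfc_congr fun x _ => by simpa using mul_inv_mul_cancel x⁻¹
  have hAQ : A * Q = A := by
    have h1Q : 1 - Q = cfc (fun x : ℝ => 1 - x⁻¹ * x) B := by
      rw [cfc_sub _ _ B (B.finite_real_spectrum.continuousOn _)
        (B.finite_real_spectrum.continuousOn _), cfc_const_one ℝ B]
    have hR : (A * (1 - Q))ᵀ * (A * (1 - Q)) = 0 := by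
      calc (A * (1 - Q))ᵀ * (A * (1 - Q)) = (1 - Q)ᵀ * B * (1 - Q) := by
            simp only [transpose_mul, B, Matrix.mul_assoc]
        _ = cfc (fun x : ℝ => (1 - x⁻¹ * x) * x * (1 - x⁻¹ * x)) B := by
            rw [h1Q, transpose_cfc, cfc_mul_self hB, cfc_mul_cfc]
        _ = 0 := by
            rw [← cfc_zero ℝ B]
            exact cfc_congr fun x _ => by simp [sub_mul]
    rw [← conjTranspose_eq_transpose_of_trivial, conjTranspose_mul_self_eq_zero, Matrix.mul_sub,
      Matrix.mul_one, sub_eq_zero] at hR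
    exact hR.symm
  refine ⟨C * Aᵀ, ?_, ?_, ?_, ?_⟩
  · rw [Matrix.mul_assoc, Matrix.mul_assoc, hCB, hAQ]
  · calc C * Aᵀ * A * (C * Aᵀ) = C * B * C * Aᵀ := by simp only [B, Matrix.mul_assoc]
      _ = C * Aᵀ := by rw [hCBC]
  · rw [transpose_mul, transpose_mul, transpose_transpose, transpose_cfc, Matrix.mul_assoc]
  · rw [Matrix.mul_assoc, hCB, transpose_cfc]

theorem pinv_spec (A : Matrix m n ℝ) :
    A * pinv A * A = A ∧ pinv A * A * pinv A = pinv A ∧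
      (A * pinv A)ᵀ = A * pinv A ∧ (pinv A * A)ᵀ = pinv A * A := by
  classical
  have h := exists_penrose A
  rw [pinv, dif_pos h]
  exact h.choose_spec

theorem isStarProjection_mul_pinv (A : Matrix m n ℝ) : IsStarProjection (A * pinv A) where
  isIdempotentElem := by
    rw [IsIdempotentElem, ← Matrix.mul_assoc, (pinv_spec A).1]
  isSelfAdjoint := by
    rw [IsSelfAdjoint, star_eq_conjTranspose, conjTranspose_eq_transpose_of_trivial,
      (pinv_spec A).2.2.1]

theorem one_sub_mul_pinv_mul_self [DecidableEq m] (A : Matrix m n ℝ) :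
    (1 - A * pinv A) * A = 0 := by
  rw [Matrix.sub_mul, Matrix.one_mul, (pinv_spec A).1, sub_self]

theorem exists_mul_eq_one_of_rank_eq [DecidableEq m] {A : Matrix m n ℝ}
    (h : A.rank = Fintype.card m) : ∃ R : Matrix n m ℝ, A * R = 1 := by
  classical
  have hrange : LinearMap.range A.mulVecLin = ⊤ := by
    apply Submodule.eq_top_of_finrank_eq
    rw [← Matrix.rank, h, Module.finrank_fintype_fun_eq_card]
  obtain ⟨g, hg⟩ := A.mulVecLin.exists_rightInverse_of_surjective hrange
  refine ⟨LinearMap.toMatrix' g, ?_⟩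
  rw [← LinearMap.toMatrix'_toLin' A, Matrix.toLin'_apply', ← LinearMap.toMatrix'_comp, hg,
    LinearMap.toMatrix'_id]

theorem mul_pinv_eq_one_of_rank_eq [DecidableEq m] {A : Matrix m n ℝ}
    (h : A.rank = Fintype.card m) : A * pinv A = 1 := by
  obtain ⟨R, hR⟩ := exists_mul_eq_one_of_rank_eq h
  calc A * pinv A = A * pinv A * (A * R) := by rw [hR, Matrix.mul_one]
    _ = A * R := by rw [← Matrix.mul_assoc, (pinv_spec A).1]
    _ = 1 := hR

end Pinv

/-- (Halko–Martinsson–Tropp, Theorem 9.1, specialized to PSD `M`.)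
`M = U (diagonal D) Uᵗ` is an eigendecomposition with nonincreasing eigenvalues `D`;
`U₁`/`U₂` are the first `k`/last `n − k` eigenvector columns and `Sigma₂` the diagonal block of
the `n − k` smallest eigenvalues; `Ω₁ = U₁ᵗ S`, `Ω₂ = U₂ᵗ S`.  If `Ω₁` has full row rank, then
`‖(I − P_{M S}) M‖₂² ≤ ‖Sigma₂‖₂² + ‖Sigma₂ Ω₂ Ω₁†‖₂²`. -/
theorem random_projection_error_bound {n ℓ k : ℕ} (hkl : k ≤ ℓ) (hln : ℓ ≤ n)
    (M : Matrix (Fin n) (Fin n) ℝ)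
    (S : Matrix (Fin n) (Fin ℓ) ℝ)
    (U : Matrix (Fin n) (Fin n) ℝ) (D : Fin n → ℝ)
    (hU : Uᵀ * U = 1)
    (hMeig : M = U * Matrix.diagonal D * Uᵀ)
    (Ω₁ : Matrix (Fin k) (Fin ℓ) ℝ) (Ω₂ : Matrix (Fin (n - k)) (Fin ℓ) ℝ)
    (Sigma₂ : Matrix (Fin (n - k)) (Fin (n - k)) ℝ)
    (hΩ₁ : Ω₁ = (U.submatrix id (Fin.castLE (hkl.trans hln)))ᵀ * S)
    (hΩ₂ : Ω₂ = (U.submatrix id fun j : Fin (n - k) =>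
        Fin.cast (by omega : k + (n - k) = n) (Fin.natAdd k j))ᵀ * S)
    (hSigma₂ : Sigma₂ = Matrix.diagonal fun j : Fin (n - k) =>
        D (Fin.cast (by omega : k + (n - k) = n) (Fin.natAdd k j)))
    (hrank : Ω₁.rank = k) :
    ‖((1 : Matrix (Fin n) (Fin n) ℝ) - (M * S) * pinv (M * S)) * M‖ ^ 2 ≤
      ‖Sigma₂‖ ^ 2 + ‖Sigma₂ * Ω₂ * pinv Ω₁‖ ^ 2 := by
  set U₁ := U.submatrix id (Fin.castLE (hkl.trans hln))
  set U₂ := U.submatrix id fun j : Fin (n - k) =>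
    Fin.cast (by omega : k + (n - k) = n) (Fin.natAdd k j)
  set e : Fin k ⊕ Fin (n - k) ≃ Fin n := finSumFinEquiv.trans (finCongr (by omega))
  have horth : (fromCols U₁ U₂)ᵀ * fromCols U₁ U₂ = 1 := by
    have hcols : fromCols U₁ U₂ = U.submatrix id e := by ext i (j | j) <;> rfl
    rw [hcols]
    exact transpose_mul_self_submatrix_eq_one hU e
  obtain ⟨hU₁, -, hU₂₁, hU₂⟩ := (transpose_mul_self_fromCols_eq_one_iff U₁ U₂).mp horth
  have hMU₂ : M * U₂ = U₂ * Sigma₂ := by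
    rw [hSigma₂]
    exact mul_submatrix_id_eq_of_mul_eq_mul_diagonal
      (by rw [hMeig, Matrix.mul_assoc, hU, Matrix.mul_one]) _
  have hT : U₁ᵀ * S * pinv Ω₁ = 1 := by
    rw [← hΩ₁]
    exact mul_pinv_eq_one_of_rank_eq (by simpa using hrank)
  have hres := sub_mul_mul_transpose_eq_of_mul_eq S
    (mul_transpose_add_mul_transpose_eq_one e.symm horth) hMU₂ hT
  calc ‖(1 - M * S * pinv (M * S)) * M‖ ^ 2
      = ‖(1 - M * S * pinv (M * S)) * (M - M * S * pinv Ω₁ * U₁ᵀ)‖ ^ 2 := by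
        rw [Matrix.mul_sub, Matrix.mul_assoc (M * S), ← Matrix.mul_assoc _ (M * S),
          one_sub_mul_pinv_mul_self, Matrix.zero_mul, sub_zero]
    _ ≤ ‖M - M * S * pinv Ω₁ * U₁ᵀ‖ ^ 2 := by
        gcongr
        exact l2_opNorm_one_sub_mul_le (isStarProjection_mul_pinv _) _
    _ = ‖Sigma₂ * U₂ᵀ - Sigma₂ * Ω₂ * pinv Ω₁ * U₁ᵀ‖ ^ 2 := by
        rw [hres, l2_opNorm_mul_of_transpose_mul_self_eq_one hU₂, hΩ₂]
    _ ≤ ‖Sigma₂‖ ^ 2 + ‖Sigma₂ * Ω₂ * pinv Ω₁‖ ^ 2 :=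
        sq_l2_opNorm_mul_transpose_sub_le hU₂ hU₁ hU₂₁ _ _
end

section
/- Let A be an n×n real PSD matrix of rank exactly k, let U₁ have orthonormal columns spanning the range of A, and let τ = μ₀(U₁). Fix δ ∈ (0,1) and ε ∈ (0,1). If S samples ℓ ≥ 2τk·log(k/δ)/(1−ε)² columns of A uniformly at random without replacement, then with probability exceeding 1 − δ the Nyström extension recovers A exactly: A = C W† Cᵗ. -/
open Matrix
open scoped Matrix.Norms.L2Operator

/-!
Since the columns of `U₁` span the range of the symmetric matrix `A`, we have `A = U₁ B U₁ᵀ`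
with `B = U₁ᵀ A U₁`, and `B` is invertible because `A` has rank `k`. Whenever the sampled rows
of `U₁` span `ℝᵏ`, the sketch `G = Sᵀ U₁` has a left inverse `L` with `G L` symmetric; then
`W† = Lᵀ B⁻¹ L` and `C W† Cᵀ = U₁ B U₁ᵀ = A`.

The rows of `U₁` form a Parseval frame of `ℝᵏ` whose squared norms are at most `μ = τ k / n`.
If the first `t` sampled rows span a subspace of codimension `d`, the rows outside that
subspace carry squared norm at least `d`, so there are at least `d / μ` of them, and the next
sampled row lowers `d` by one with probability at least `d / (n μ)`. Hence the expected
codimension after `ℓ` samples is at most `(1 - 1/(τk))^ℓ k ≤ k e^{-ℓ/(τk)} < δ`, and Markov's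
inequality bounds the probability that the sampled rows fail to span.
-/

def IsMoorePenroseInverse {m n : Type*} [Fintype m] [Fintype n] (M : Matrix m n ℝ)
    (X : Matrix n m ℝ) : Prop :=
  M * X * M = M ∧ X * M * X = X ∧ (M * X)ᵀ = M * X ∧ (X * M)ᵀ = X * M

namespace IsMoorePenroseInverse

variable {m n : Type*} [Fintype m] [Fintype n] {M : Matrix m n ℝ} {X Y : Matrix n m ℝ}

theorem mul_left_eq (hX : IsMoorePenroseInverse M X) (hY : IsMoorePenroseInverse M Y) :
    M * X = M * Y := by
  obtain ⟨hX₁, -, hX₃, -⟩ := hX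
  obtain ⟨hY₁, -, hY₃, -⟩ := hY
  calc M * X = (M * Y * M) * X := by rw [hY₁]
    _ = ((M * X) * (M * Y))ᵀ := by
      rw [transpose_mul, hY₃, hX₃, Matrix.mul_assoc (M * Y)]
    _ = M * Y := by rw [← Matrix.mul_assoc, hX₁, hY₃]

theorem mul_right_eq (hX : IsMoorePenroseInverse M X) (hY : IsMoorePenroseInverse M Y) :
    X * M = Y * M := by
  obtain ⟨hX₁, -, -, hX₄⟩ := hX
  obtain ⟨hY₁, -, -, hY₄⟩ := hY
  calc X * M = X * (M * Y * M) := by rw [hY₁]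
    _ = ((Y * M) * (X * M))ᵀ := by
      rw [transpose_mul, hY₄, hX₄]
      simp only [Matrix.mul_assoc]
    _ = Y * M := by rw [Matrix.mul_assoc Y, ← Matrix.mul_assoc M X M, hX₁, hY₄]

theorem unique (hX : IsMoorePenroseInverse M X) (hY : IsMoorePenroseInverse M Y) : X = Y :=
  calc X = X * M * X := hX.2.1.symm
    _ = Y * M * Y := by
      rw [hX.mul_right_eq hY, Matrix.mul_assoc, hX.mul_left_eq hY, ← Matrix.mul_assoc]
    _ = Y := hY.2.1

end IsMoorePenroseInverse

theorem pinv_eq_of_isMoorePenroseInverse {m n : Type*} [Fintype m] [Fintype n]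
    {M : Matrix m n ℝ} {X : Matrix n m ℝ} (hX : IsMoorePenroseInverse M X) : pinv M = X := by
  have h : ∃ Y, IsMoorePenroseInverse M Y := ⟨X, hX⟩
  exact (dif_pos h).trans (h.choose_spec.unique hX)

theorem pinv_mul_mul_transpose {l k : Type*} [Fintype l] [Fintype k] [DecidableEq k]
    {G : Matrix l k ℝ} {L : Matrix k l ℝ} (hLG : L * G = 1) (hGL : (G * L).IsSymm)
    {B : Matrix k k ℝ} (hB : IsUnit B) :
    pinv (G * B * Gᵀ) = Lᵀ * B⁻¹ * L := by
  have hB' : IsUnit B.det := (isUnit_iff_isUnit_det B).mp hB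
  have hGLt : Gᵀ * Lᵀ = 1 := by rw [← transpose_mul, hLG, transpose_one]
  have hWX : G * B * Gᵀ * (Lᵀ * B⁻¹ * L) = G * L := by
    simp only [Matrix.mul_assoc]
    rw [← Matrix.mul_assoc Gᵀ, hGLt, Matrix.one_mul, ← Matrix.mul_assoc B,
      mul_nonsing_inv _ hB', Matrix.one_mul]
  have hXW : Lᵀ * B⁻¹ * L * (G * B * Gᵀ) = Lᵀ * Gᵀ := by
    simp only [Matrix.mul_assoc]
    rw [← Matrix.mul_assoc L, hLG, Matrix.one_mul, ← Matrix.mul_assoc B⁻¹,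
      nonsing_inv_mul _ hB', Matrix.one_mul]
  apply pinv_eq_of_isMoorePenroseInverse
  refine ⟨?_, ?_, by rw [hWX]; exact hGL.eq, ?_⟩
  · rw [hWX]
    simp only [Matrix.mul_assoc]
    rw [← Matrix.mul_assoc L G, hLG, Matrix.one_mul]
  · rw [hXW]
    simp only [Matrix.mul_assoc]
    rw [← Matrix.mul_assoc Gᵀ Lᵀ, hGLt, Matrix.one_mul]
  · rw [hXW, ← transpose_mul, transpose_transpose, hGL.eq]

theorem Matrix.isUnit_of_rank_eq_card {k : Type*} [Fintype k] [DecidableEq k]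
    {A : Matrix k k ℝ} (hA : A.rank = Fintype.card k) : IsUnit A := by
  rw [← mulVec_surjective_iff_isUnit, ← Matrix.coe_mulVecLin, ← LinearMap.range_eq_top]
  apply Submodule.eq_top_of_finrank_eq
  rw [Module.finrank_fintype_fun_eq_card, ← hA]
  rfl

theorem Matrix.exists_leftInverse_of_rank_eq_card {l k : Type*} [Fintype l] [Fintype k]
    [DecidableEq k] {G : Matrix l k ℝ} (hG : G.rank = Fintype.card k) :
    ∃ L : Matrix k l ℝ, L * G = 1 ∧ (G * L).IsSymm := by
  have hGG : IsUnit (Gᵀ * G).det :=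
    (isUnit_iff_isUnit_det _).mp (isUnit_of_rank_eq_card (by rw [rank_transpose_mul_self, hG]))
  refine ⟨(Gᵀ * G)⁻¹ * Gᵀ, by rw [Matrix.mul_assoc, nonsing_inv_mul _ hGG], ?_⟩
  rw [IsSymm, transpose_mul, transpose_mul, transpose_transpose, transpose_nonsing_inv,
    transpose_mul, transpose_transpose, Matrix.mul_assoc]

theorem nystrom_eq_of_eq_mul_mul_transpose {m l k : Type*} [Fintype m] [Fintype l] [Fintype k]
    [DecidableEq k] {A : Matrix m m ℝ} (hAt : A.IsSymm) {U : Matrix m k ℝ} {B : Matrix k k ℝ}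
    (hB : IsUnit B) (hA : A = U * B * Uᵀ) {S : Matrix m l ℝ}
    (hS : (Sᵀ * U).rank = Fintype.card k) :
    A = (A * S) * pinv (Sᵀ * A * S) * (A * S)ᵀ := by
  obtain ⟨L, hLG, hGL⟩ := exists_leftInverse_of_rank_eq_card hS
  have hW : Sᵀ * A * S = (Sᵀ * U) * B * (Sᵀ * U)ᵀ := by
    rw [hA]; simp only [transpose_mul, transpose_transpose, Matrix.mul_assoc]
  have hC : A * S = U * B * (Sᵀ * U)ᵀ := by
    rw [hA]; simp only [transpose_mul, transpose_transpose, Matrix.mul_assoc]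
  have hGLt : (Sᵀ * U)ᵀ * Lᵀ = 1 := by rw [← transpose_mul, hLG, transpose_one]
  have hB' : IsUnit B.det := (isUnit_iff_isUnit_det B).mp hB
  rw [hW, pinv_mul_mul_transpose hLG hGL hB, hC]
  calc A = Aᵀ := hAt.eq.symm
    _ = U * Bᵀ * Uᵀ := by rw [hA]; simp only [transpose_mul, transpose_transpose, Matrix.mul_assoc]
    _ = U * B * ((Sᵀ * U)ᵀ * Lᵀ) * B⁻¹ * (L * (Sᵀ * U)) * Bᵀ * Uᵀ := by
      rw [hGLt, hLG, Matrix.mul_one, Matrix.mul_one, Matrix.mul_assoc U B, mul_nonsing_inv _ hB',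
        Matrix.mul_one]
    _ = U * B * (Sᵀ * U)ᵀ * (Lᵀ * B⁻¹ * L) * (U * B * (Sᵀ * U)ᵀ)ᵀ := by
      simp only [transpose_mul, transpose_transpose, Matrix.mul_assoc]

theorem eq_mul_mul_transpose_of_range_le {m k : Type*} [Fintype m] [Fintype k] [DecidableEq k]
    {A : Matrix m m ℝ} (hAt : A.IsSymm) {U : Matrix m k ℝ} (hU : Uᵀ * U = 1)
    (hrange : LinearMap.range A.mulVecLin ≤ LinearMap.range U.mulVecLin) :
    A = U * (Uᵀ * A * U) * Uᵀ := by
  have hPA : U * Uᵀ * A = A := by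
    refine ext_iff_mulVec.mpr fun v => ?_
    obtain ⟨x, hx⟩ := hrange (LinearMap.mem_range_self A.mulVecLin v)
    simp only [mulVecLin_apply] at hx
    rw [← mulVec_mulVec, ← hx, mulVec_mulVec, Matrix.mul_assoc, hU, Matrix.mul_one]
  have hAP : A * (U * Uᵀ) = A := by
    simpa only [transpose_mul, transpose_transpose, hAt.eq, Matrix.mul_assoc]
      using congrArg transpose hPA
  calc A = U * Uᵀ * A * (U * Uᵀ) := by rw [hPA, hAP]
    _ = U * (Uᵀ * A * U) * Uᵀ := by simp only [Matrix.mul_assoc]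

theorem isUnit_of_eq_mul_mul_transpose_of_rank_eq {m k : Type*} [Fintype m] [Fintype k]
    [DecidableEq k]
    {A : Matrix m m ℝ} {U : Matrix m k ℝ} {B : Matrix k k ℝ} (hA : A = U * B * Uᵀ)
    (hrank : A.rank = Fintype.card k) : IsUnit B :=
  isUnit_of_rank_eq_card <| le_antisymm (rank_le_card_width B) <| by
    calc Fintype.card k = (U * B * Uᵀ).rank := by rw [← hA, hrank]
      _ ≤ (U * B).rank := rank_mul_le_left _ _
      _ ≤ B.rank := rank_mul_le_right _ _

section ParsevalFrame

open Module Submodule Finset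

variable {ι E : Type*} [Fintype ι] [NormedAddCommGroup E] [InnerProductSpace ℝ E]
  [FiniteDimensional ℝ E]

def IsParsevalFrame (u : ι → E) : Prop :=
  ∀ w : E, ∑ i, inner ℝ (u i) w ^ 2 = ‖w‖ ^ 2

open scoped Classical in
/-- Each unit vector of `Vᗮ` draws its full weight from the frame vectors outside `V`, while
by Bessel's inequality every frame vector `u i` contributes at most `‖u i‖²` in total. -/
theorem IsParsevalFrame.finrank_orthogonal_le {u : ι → E} (hu : IsParsevalFrame u)
    (V : Submodule ℝ E) :
    (finrank ℝ Vᗮ : ℝ) ≤ ∑ i ∈ univ.filter (fun i => u i ∉ V), ‖u i‖ ^ 2 := by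
  set b := stdOrthonormalBasis ℝ Vᗮ
  have hb : Orthonormal ℝ (Vᗮ.subtypeₗᵢ ∘ b) := b.orthonormal.comp_linearIsometry _
  have hunit (j) : ∑ i ∈ univ.filter (fun i => u i ∉ V), inner ℝ (u i) (b j : E) ^ 2 = 1 := by
    have hvanish : ∀ i ∈ univ, inner ℝ (u i) (b j : E) ^ 2 ≠ 0 → u i ∉ V := fun i _ h hV =>
      h (by rw [inner_right_of_mem_orthogonal hV (b j).2, zero_pow two_ne_zero])
    rw [sum_filter_of_ne hvanish, hu, norm_coe, b.orthonormal.1 j, one_pow]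
  calc (finrank ℝ Vᗮ : ℝ) = ∑ j, ∑ i ∈ univ.filter (fun i => u i ∉ V),
        inner ℝ (u i) (b j : E) ^ 2 := by simp [hunit]
    _ = ∑ i ∈ univ.filter (fun i => u i ∉ V), ∑ j, ‖inner ℝ ((Vᗮ.subtypeₗᵢ ∘ b) j) (u i)‖ ^ 2 := by
      rw [sum_comm]
      simp only [Function.comp_apply, coe_subtypeₗᵢ, subtype_apply, Real.norm_eq_abs, sq_abs,
        real_inner_comm]
    _ ≤ ∑ i ∈ univ.filter (fun i => u i ∉ V), ‖u i‖ ^ 2 :=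
      sum_le_sum fun i _ => hb.sum_inner_products_le (u i)

theorem IsParsevalFrame.finrank_le_sum_norm_sq {u : ι → E} (hu : IsParsevalFrame u) :
    (finrank ℝ E : ℝ) ≤ ∑ i, ‖u i‖ ^ 2 := by
  classical
  calc (finrank ℝ E : ℝ) = finrank ℝ (⊥ : Submodule ℝ E)ᗮ := by
        rw [bot_orthogonal_eq_top, finrank_top]
    _ ≤ _ := hu.finrank_orthogonal_le ⊥
    _ ≤ ∑ i, ‖u i‖ ^ 2 := sum_le_sum_of_subset_of_nonneg (subset_univ _) fun _ _ _ => by positivity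

end ParsevalFrame

section SpanDefect

open Module Submodule Finset

variable {ι E : Type*} [NormedAddCommGroup E] [InnerProductSpace ℝ E] {u : ι → E}

noncomputable def spanDefect (u : ι → E) (s : Finset ι) : ℕ :=
  finrank ℝ (span ℝ (u '' s))ᗮ

theorem spanDefect_empty : spanDefect u ∅ = finrank ℝ E := by
  rw [spanDefect, coe_empty, Set.image_empty, span_empty, bot_orthogonal_eq_top, finrank_top]

theorem spanDefect_insert_of_mem [DecidableEq ι] {s : Finset ι} {i : ι}
    (h : u i ∈ span ℝ (u '' s)) : spanDefect u (insert i s) = spanDefect u s := by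
  rw [spanDefect, coe_insert, Set.image_insert_eq, span_insert_eq_span h, spanDefect]

variable [FiniteDimensional ℝ E]

theorem spanDefect_eq_zero_iff {s : Finset ι} : spanDefect u s = 0 ↔ span ℝ (u '' s) = ⊤ := by
  rw [spanDefect, finrank_eq_zero, orthogonal_eq_bot_iff]

theorem spanDefect_insert_add_one [DecidableEq ι] {s : Finset ι} {i : ι}
    (h : u i ∉ span ℝ (u '' s)) : spanDefect u (insert i s) + 1 = spanDefect u s := by
  have hfr : finrank ℝ (span ℝ (u '' insert i (s : Set ι))) = finrank ℝ (span ℝ (u '' s)) + 1 := by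
    rw [Set.image_insert_eq, span_insert, sup_comm, finrank_sup_span_singleton h]
  have hs := finrank_add_finrank_orthogonal (span ℝ (u '' s))
  have hins := finrank_add_finrank_orthogonal (span ℝ (u '' insert i (s : Set ι)))
  rw [spanDefect, spanDefect, coe_insert]
  omega

variable [Fintype ι] [DecidableEq ι]

open scoped Classical in
theorem IsParsevalFrame.spanDefect_le {μ : ℝ} (hu : IsParsevalFrame u)
    (hμ : ∀ i, ‖u i‖ ^ 2 ≤ μ) (s : Finset ι) :
    (spanDefect u s : ℝ) ≤ μ * #{i ∈ sᶜ | u i ∉ span ℝ (u '' s)} := by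
  have hout : univ.filter (fun i => u i ∉ span ℝ (u '' s)) =
      sᶜ.filter (fun i => u i ∉ span ℝ (u '' s)) := by
    ext i
    simp only [mem_filter, mem_univ, true_and, mem_compl]
    exact ⟨fun h => ⟨fun hi => h (subset_span (Set.mem_image_of_mem u hi)), h⟩, And.right⟩
  calc (spanDefect u s : ℝ) ≤ ∑ i ∈ sᶜ.filter (fun i => u i ∉ span ℝ (u '' s)), ‖u i‖ ^ 2 := by
        rw [← hout]; exact hu.finrank_orthogonal_le _
    _ ≤ _ := by rw [mul_comm, ← nsmul_eq_mul]; exact sum_le_card_nsmul _ _ _ fun i _ => hμ i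

/-- The defect drops by one exactly at the new indices counted in `spanDefect_le`. -/
theorem IsParsevalFrame.sum_spanDefect_insert_le {μ : ℝ} (hu : IsParsevalFrame u)
    (hμ : ∀ i, ‖u i‖ ^ 2 ≤ μ) (s : Finset ι) :
    ∑ i ∈ sᶜ, (spanDefect u (insert i s) : ℝ) ≤
      (1 - 1 / (Fintype.card ι * μ)) * #sᶜ * spanDefect u s := by
  classical
  set V := span ℝ (u '' s)
  set d : ℝ := (spanDefect u s : ℝ) with hd
  set r : ℝ := ((#{i ∈ sᶜ | u i ∉ V} : ℕ) : ℝ)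
  have hins (i : ι) : (spanDefect u (insert i s) : ℝ) = d - if u i ∉ V then 1 else 0 := by
    by_cases h : u i ∈ V
    · simp [h, spanDefect_insert_of_mem h, d]
    · rw [if_pos h, hd, ← spanDefect_insert_add_one h]
      push_cast
      ring
  have hsum : ∑ i ∈ sᶜ, (spanDefect u (insert i s) : ℝ) = #sᶜ * d - r := by
    rw [sum_congr rfl fun i _ => hins i, sum_sub_distrib, sum_const, sum_boole, nsmul_eq_mul]
  have hdr : d ≤ μ * r := hu.spanDefect_le hμ s
  have hcard : (#sᶜ : ℝ) ≤ Fintype.card ι := by exact_mod_cast card_le_univ sᶜ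
  have hdrop : #sᶜ * d / (Fintype.card ι * μ) ≤ r := by
    rcases le_or_gt (Fintype.card ι * μ) 0 with hnμ | hnμ
    · exact (div_nonpos_of_nonneg_of_nonpos (by positivity) hnμ).trans (by positivity)
    · rw [div_le_iff₀ hnμ]
      calc #sᶜ * d ≤ Fintype.card ι * d := by gcongr
        _ ≤ Fintype.card ι * (μ * r) := by gcongr
        _ = r * (Fintype.card ι * μ) := by ring
  rw [hsum]
  linarith [show (1 - 1 / (Fintype.card ι * μ)) * #sᶜ * d =
    #sᶜ * d - #sᶜ * d / (Fintype.card ι * μ) by ring]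

end SpanDefect

section PrefixSampling

open Finset

variable {n : ℕ}

/-- The set `{σ 0, …, σ (t - 1)}` of the first `t` values of `σ`. -/
def prefixSet (σ : Equiv.Perm (Fin n)) (t : ℕ) : Finset (Fin n) :=
  univ.filter fun i => (σ.symm i : ℕ) < t

theorem prefixSet_zero (σ : Equiv.Perm (Fin n)) : prefixSet σ 0 = ∅ := by
  simp [prefixSet]

theorem prefixSet_succ (σ : Equiv.Perm (Fin n)) {t : ℕ} (ht : t < n) :
    prefixSet σ (t + 1) = insert (σ ⟨t, ht⟩) (prefixSet σ t) := by
  ext i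
  simp only [prefixSet, mem_filter, mem_univ, true_and, mem_insert, Nat.lt_succ_iff_lt_or_eq,
    ← Equiv.symm_apply_eq, Fin.ext_iff, or_comm]

theorem prefixSet_mul_swap (σ : Equiv.Perm (Fin n)) {a b : Fin n} {t : ℕ} (ha : t ≤ a)
    (hb : t ≤ b) : prefixSet (σ * Equiv.swap a b) t = prefixSet σ t := by
  ext i
  simp only [prefixSet, mem_filter, mem_univ, true_and]
  rw [Equiv.Perm.mul_def, Equiv.symm_trans_apply, Equiv.symm_swap, Equiv.swap_apply_def]
  split_ifs with h₁ h₂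
  · rw [h₁]; omega
  · rw [h₂]; omega
  · rfl

theorem sum_compl_prefixSet {M : Type*} [AddCommMonoid M] (f : Fin n → M)
    (σ : Equiv.Perm (Fin n)) (a : Fin n) :
    ∑ i ∈ (prefixSet σ a)ᶜ, f i = ∑ j ∈ Ici a, f (σ j) := by
  refine (sum_equiv σ (fun j => ?_) fun j _ => rfl).symm
  simp [prefixSet]

theorem card_compl_prefixSet (σ : Equiv.Perm (Fin n)) (a : Fin n) :
    #(prefixSet σ a)ᶜ = n - a := by
  rw [card_eq_sum_ones, sum_compl_prefixSet, ← card_eq_sum_ones, Fin.card_Ici]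

/-- Growing a uniformly random prefix by one entry is the same as adding a uniformly random
new index: for each `j ≥ t`, right multiplication by `swap t j` moves `σ j` to position `t`
without changing the first `t` entries. -/
theorem card_mul_sum_prefixSet_succ (f : Finset (Fin n) → ℝ) {t : ℕ} (ht : t < n) :
    ((n - t : ℕ) : ℝ) * ∑ σ : Equiv.Perm (Fin n), f (prefixSet σ (t + 1)) =
      ∑ σ : Equiv.Perm (Fin n), ∑ i ∈ (prefixSet σ t)ᶜ, f (insert i (prefixSet σ t)) := by
  set a : Fin n := ⟨t, ht⟩
  have hswap (j : Fin n) (hj : a ≤ j) : ∑ σ : Equiv.Perm (Fin n), f (prefixSet σ (t + 1)) =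
      ∑ σ : Equiv.Perm (Fin n), f (insert (σ j) (prefixSet σ t)) := by
    refine Fintype.sum_equiv (Equiv.mulRight (Equiv.swap a j)) _ _ fun σ => ?_
    rw [prefixSet_succ _ ht, Equiv.coe_mulRight, Equiv.Perm.mul_apply, Equiv.swap_apply_right,
      prefixSet_mul_swap σ le_rfl hj]
  calc ((n - t : ℕ) : ℝ) * ∑ σ : Equiv.Perm (Fin n), f (prefixSet σ (t + 1))
      = ∑ j ∈ Ici a, ∑ σ : Equiv.Perm (Fin n), f (prefixSet σ (t + 1)) := by
        rw [sum_const, Fin.card_Ici, nsmul_eq_mul]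
    _ = ∑ j ∈ Ici a, ∑ σ : Equiv.Perm (Fin n), f (insert (σ j) (prefixSet σ t)) :=
        sum_congr rfl fun j hj => hswap j (mem_Ici.mp hj)
    _ = ∑ σ : Equiv.Perm (Fin n), ∑ i ∈ (prefixSet σ t)ᶜ, f (insert i (prefixSet σ t)) := by
        rw [sum_comm]
        exact sum_congr rfl fun σ _ =>
          (sum_compl_prefixSet (fun i => f (insert i (prefixSet σ t))) σ a).symm

end PrefixSampling

theorem one_sub_inv_pow_mul_lt {K k δ ε : ℝ} {ℓ : ℕ} (hk : 1 ≤ k) (hkK : k ≤ K)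
    (hδ : δ ∈ Set.Ioo (0 : ℝ) 1) (hε : ε ∈ Set.Ioo (0 : ℝ) 1)
    (hℓ : (ℓ : ℝ) ≥ 2 * K * Real.log (k / δ) / (1 - ε) ^ 2) :
    (1 - 1 / K) ^ ℓ * k < δ := by
  obtain ⟨hδ₀, hδ₁⟩ := hδ
  have hK : 0 < K := by linarith
  have hL : 0 < Real.log (k / δ) := Real.log_pos (by rw [lt_div_iff₀ hδ₀]; linarith)
  have hℓL : Real.log (k / δ) < ℓ / K := by
    rw [lt_div_iff₀ hK]
    calc Real.log (k / δ) * K < 2 * K * Real.log (k / δ) := by nlinarith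
      _ ≤ 2 * K * Real.log (k / δ) / (1 - ε) ^ 2 :=
        le_div_self (by positivity) (by nlinarith [hε.2]) (by nlinarith [hε.1, hε.2])
      _ ≤ ℓ := hℓ
  have hγ : 0 ≤ 1 - 1 / K := by rw [sub_nonneg, div_le_one hK]; linarith
  calc (1 - 1 / K) ^ ℓ * k ≤ Real.exp (-(1 / K)) ^ ℓ * k := by
        gcongr
        exact Real.one_sub_le_exp_neg _
    _ = Real.exp (-(ℓ / K)) * k := by rw [← Real.exp_nat_mul]; ring_nf
    _ < Real.exp (-Real.log (k / δ)) * k := by gcongr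
    _ = δ := by rw [Real.exp_neg, Real.exp_log (by positivity)]; field_simp

section Sampling

open Module Submodule Finset

variable {n : ℕ} {E : Type*} [NormedAddCommGroup E] [InnerProductSpace ℝ E]
  [FiniteDimensional ℝ E] {u : Fin n → E} {μ : ℝ}

theorem IsParsevalFrame.sum_spanDefect_prefixSet_le (hu : IsParsevalFrame u)
    (hμ : ∀ i, ‖u i‖ ^ 2 ≤ μ) (hγ : 0 ≤ 1 - 1 / (n * μ)) {t : ℕ} (ht : t ≤ n) :
    ∑ σ : Equiv.Perm (Fin n), (spanDefect u (prefixSet σ t) : ℝ) ≤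
      (1 - 1 / (n * μ)) ^ t * (Fintype.card (Equiv.Perm (Fin n)) * finrank ℝ E) := by
  induction t with
  | zero => simp [prefixSet_zero, spanDefect_empty]
  | succ t ih =>
    have htn : t < n := ht
    have hpos : (0 : ℝ) < (n - t : ℕ) := by exact_mod_cast Nat.sub_pos_of_lt htn
    rw [← mul_le_mul_iff_right₀ hpos,
      card_mul_sum_prefixSet_succ (fun s => (spanDefect u s : ℝ)) htn]
    calc ∑ σ : Equiv.Perm (Fin n), ∑ i ∈ (prefixSet σ t)ᶜ,
          (spanDefect u (insert i (prefixSet σ t)) : ℝ)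
        ≤ ∑ σ : Equiv.Perm (Fin n), (1 - 1 / (n * μ)) * (n - t : ℕ) *
          (spanDefect u (prefixSet σ t) : ℝ) := by
          refine sum_le_sum fun σ _ => ?_
          have := hu.sum_spanDefect_insert_le hμ (prefixSet σ t)
          rwa [Fintype.card_fin, card_compl_prefixSet σ ⟨t, htn⟩] at this
      _ ≤ (1 - 1 / (n * μ)) * (n - t : ℕ) * ((1 - 1 / (n * μ)) ^ t *
          (Fintype.card (Equiv.Perm (Fin n)) * finrank ℝ E)) := by
          rw [← mul_sum]
          exact mul_le_mul_of_nonneg_left (ih htn.le) (by positivity)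
      _ = _ := by ring

open scoped Classical in
theorem IsParsevalFrame.card_span_prefixSet_ne_top_lt (hu : IsParsevalFrame u)
    (hμ : ∀ i, ‖u i‖ ^ 2 ≤ μ) {δ ε : ℝ} {ℓ : ℕ} (hℓn : ℓ ≤ n) (hδ : δ ∈ Set.Ioo (0 : ℝ) 1)
    (hε : ε ∈ Set.Ioo (0 : ℝ) 1)
    (hℓ : (ℓ : ℝ) ≥ 2 * (n * μ) * Real.log (finrank ℝ E / δ) / (1 - ε) ^ 2) :
    (#{σ : Equiv.Perm (Fin n) | span ℝ (u '' prefixSet σ ℓ) ≠ ⊤} : ℝ) <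
      δ * Fintype.card (Equiv.Perm (Fin n)) := by
  have hcount : (#{σ : Equiv.Perm (Fin n) | span ℝ (u '' prefixSet σ ℓ) ≠ ⊤} : ℝ) ≤
      ∑ σ : Equiv.Perm (Fin n), (spanDefect u (prefixSet σ ℓ) : ℝ) := by
    rw [card_filter, Nat.cast_sum]
    refine sum_le_sum fun σ _ => ?_
    split_ifs with h
    · exact_mod_cast Nat.one_le_iff_ne_zero.mpr (spanDefect_eq_zero_iff.not.mpr h)
    · simp
  rcases Nat.eq_zero_or_pos (finrank ℝ E) with hk | hk
  · have hzero (σ : Equiv.Perm (Fin n)) : spanDefect u (prefixSet σ ℓ) = 0 :=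
      Nat.eq_zero_of_le_zero (hk ▸ Submodule.finrank_le _)
    simp only [hzero, Nat.cast_zero, sum_const_zero] at hcount
    exact hcount.trans_lt (mul_pos hδ.1 (by exact_mod_cast Fintype.card_pos))
  · have hkK : (finrank ℝ E : ℝ) ≤ n * μ := by
      calc (finrank ℝ E : ℝ) ≤ ∑ i, ‖u i‖ ^ 2 := hu.finrank_le_sum_norm_sq
        _ ≤ ∑ _i : Fin n, μ := sum_le_sum fun i _ => hμ i
        _ = n * μ := by simp
    have hk₁ : (1 : ℝ) ≤ finrank ℝ E := by exact_mod_cast hk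
    have hγ : 0 ≤ 1 - 1 / (n * μ) := by
      rw [sub_nonneg, div_le_one (by linarith)]; linarith
    calc (#{σ : Equiv.Perm (Fin n) | span ℝ (u '' prefixSet σ ℓ) ≠ ⊤} : ℝ)
        ≤ (1 - 1 / (n * μ)) ^ ℓ * (Fintype.card (Equiv.Perm (Fin n)) * finrank ℝ E) :=
          hcount.trans (hu.sum_spanDefect_prefixSet_le hμ hγ hℓn)
      _ = (1 - 1 / (n * μ)) ^ ℓ * finrank ℝ E * Fintype.card (Equiv.Perm (Fin n)) := by ring
      _ < δ * Fintype.card (Equiv.Perm (Fin n)) := by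
          gcongr
          exact one_sub_inv_pow_mul_lt hk₁ hkK hδ hε hℓ

end Sampling

theorem isParsevalFrame_toLp_rows {m k : Type*} [Fintype m] [Fintype k] [DecidableEq k]
    {U : Matrix m k ℝ} (hU : Uᵀ * U = 1) :
    IsParsevalFrame fun i => (WithLp.toLp 2 (U i) : EuclideanSpace ℝ k) := by
  intro w
  have h : ∑ i, inner ℝ (WithLp.toLp 2 (U i) : EuclideanSpace ℝ k) w ^ 2 =
      (U *ᵥ w.ofLp) ⬝ᵥ (U *ᵥ w.ofLp) := by
    simp only [EuclideanSpace.inner_eq_star_dotProduct, star_trivial, dotProduct_comm w.ofLp, sq]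
    rfl
  rw [h, dotProduct_mulVec, vecMul_mulVec, ← mulVec_transpose, hU, transpose_one, one_mulVec,
    ← real_inner_self_eq_norm_sq, EuclideanSpace.inner_eq_star_dotProduct, star_trivial]

theorem EuclideanSpace.norm_toLp_sq {k : Type*} [Fintype k] (x : k → ℝ) :
    ‖(WithLp.toLp 2 x : EuclideanSpace ℝ k)‖ ^ 2 = ∑ j, x j ^ 2 := by
  simp [EuclideanSpace.norm_sq_eq]

theorem image_prefixSet {n ℓ : ℕ} (hln : ℓ ≤ n) (σ : Equiv.Perm (Fin n)) {α : Type*}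
    (f : Fin n → α) : f '' prefixSet σ ℓ = Set.range fun j => f (σ (Fin.castLE hln j)) := by
  ext x
  simp only [prefixSet, Finset.coe_filter, Finset.mem_univ, true_and, Set.mem_image,
    Set.mem_ofPred_eq, Set.mem_range]
  constructor
  · rintro ⟨i, hi, rfl⟩
    exact ⟨⟨_, hi⟩, by simp [Fin.castLE]⟩
  · rintro ⟨j, rfl⟩
    exact ⟨_, by simp, rfl⟩

theorem transpose_sampleMatrix_mul {n ℓ : ℕ} (hln : ℓ ≤ n) (σ : Equiv.Perm (Fin n)) {k : Type*}
    (M : Matrix (Fin n) k ℝ) :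
    (sampleMatrix hln σ)ᵀ * M = M.submatrix (fun j => σ (Fin.castLE hln j)) id := by
  ext j a
  simp [mul_apply, sampleMatrix]

open Module Submodule in
theorem rank_transpose_sampleMatrix_mul {n ℓ k : ℕ} (hln : ℓ ≤ n) (σ : Equiv.Perm (Fin n))
    {U : Matrix (Fin n) (Fin k) ℝ}
    (hspan : span ℝ ((fun i => (WithLp.toLp 2 (U i) : EuclideanSpace ℝ (Fin k))) ''
      prefixSet σ ℓ) = ⊤) :
    ((sampleMatrix hln σ)ᵀ * U).rank = k := by
  set e := (WithLp.linearEquiv 2 ℝ (Fin k → ℝ)).symm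
  rw [rank_eq_finrank_span_row, ← LinearEquiv.finrank_map_eq e, ← span_image, ← Set.range_comp,
    transpose_sampleMatrix_mul]
  have hrows : Set.range (e.toLinearMap ∘ (U.submatrix (fun j => σ (Fin.castLE hln j)) id).row) =
      (fun i => (WithLp.toLp 2 (U i) : EuclideanSpace ℝ (Fin k))) '' prefixSet σ ℓ :=
    (image_prefixSet hln σ (fun i => (WithLp.toLp 2 (U i) : EuclideanSpace ℝ (Fin k)))).symm
  rw [hrows, hspan, finrank_top, finrank_euclideanSpace_fin]

open Finset in
theorem one_sub_lt_card_filter_div {α : Type*} [Fintype α] [Nonempty α] {p q : α → Prop}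
    [DecidablePred p] [DecidablePred q] (hpq : ∀ a, p a → q a) {δ : ℝ}
    (hp : (#{a | ¬p a} : ℝ) < δ * Fintype.card α) :
    1 - δ < (#{a | q a} : ℝ) / Fintype.card α := by
  have hsplit : (#{a | p a} : ℝ) + #{a | ¬p a} = Fintype.card α := by
    exact_mod_cast card_filter_add_card_filter_not (s := univ) p
  have hmono : (#{a | p a} : ℝ) ≤ #{a | q a} := by
    exact_mod_cast card_le_card (monotone_filter_right _ fun a _ => hpq a)
  rw [lt_div_iff₀ (by exact_mod_cast Fintype.card_pos)]
  linarith

open scoped Classical in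
/-- exact recovery, cf. Talwalkar–Rostamizadeh. Let `A` be PSD of rank
exactly `k`, let `U₁` have orthonormal columns spanning the range of `A`, and let
`τ = μ₀(U₁)`.  Fix `δ, ε ∈ (0,1)`.  If `ℓ ≥ 2τk log(k/δ)/(1−ε)²` columns of `A` are sampled
uniformly without replacement, then with probability exceeding `1 − δ` the Nyström extension
recovers `A` exactly: `A = C W† Cᵗ`. -/
theorem naive_nystrom_exact_recovery {n ℓ k : ℕ} (hln : ℓ ≤ n)
    (A : Matrix (Fin n) (Fin n) ℝ) (hA : A.PosSemidef) (hrank : A.rank = k)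
    (U₁ : Matrix (Fin n) (Fin k) ℝ) (hU₁ : U₁ᵀ * U₁ = 1)
    (hspan : Submodule.span ℝ (Set.range U₁ᵀ) = LinearMap.range A.mulVecLin)
    (τ δ ε : ℝ) (hτ : τ = coherence U₁)
    (hδ : δ ∈ Set.Ioo (0 : ℝ) 1) (hε : ε ∈ Set.Ioo (0 : ℝ) 1)
    (hℓ : (ℓ : ℝ) ≥ 2 * τ * k * Real.log (k / δ) / (1 - ε) ^ 2) :
    (1 : ℝ) - δ <
      ((Finset.univ.filter fun σ : Equiv.Perm (Fin n) =>
          A = (A * sampleMatrix hln σ) *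
              pinv ((sampleMatrix hln σ)ᵀ * A * sampleMatrix hln σ) *
              (A * sampleMatrix hln σ)ᵀ).card : ℝ) /
        (Fintype.card (Equiv.Perm (Fin n)) : ℝ) := by
  have hAt : A.IsSymm := by simpa [IsSymm] using hA.isHermitian.eq
  have hfac := eq_mul_mul_transpose_of_range_le hAt hU₁
    (by rw [← hspan, range_mulVecLin U₁]; exact le_rfl)
  have hB := isUnit_of_eq_mul_mul_transpose_of_rank_eq hfac (by rw [hrank, Fintype.card_fin])
  have hτk : τ * k * Real.log (k / δ) = n * (⨆ i, ∑ j, U₁ i j ^ 2) * Real.log (k / δ) := by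
    rcases eq_or_ne k 0 with rfl | hk
    · simp
    · rw [hτ, coherence]; field_simp
  have hμ (i : Fin n) : ‖(WithLp.toLp 2 (U₁ i) : EuclideanSpace ℝ (Fin k))‖ ^ 2 ≤
      ⨆ i, ∑ j, U₁ i j ^ 2 :=
    (EuclideanSpace.norm_toLp_sq _).trans_le
      (le_ciSup (f := fun i => ∑ j, U₁ i j ^ 2) (Set.finite_range _).bddAbove i)
  refine one_sub_lt_card_filter_div (fun σ hσ => nystrom_eq_of_eq_mul_mul_transpose hAt hB hfac
    (by rw [Fintype.card_fin]; exact rank_transpose_sampleMatrix_mul hln σ hσ)) ?_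
  exact (isParsevalFrame_toLp_rows hU₁).card_span_prefixSet_ne_top_lt hμ hln hδ hε
    (by rw [finrank_euclideanSpace_fin]; linear_combination hℓ - 2 / (1 - ε) ^ 2 * hτk)
end

section
/- Let A and Ã be n×n real PSD matrices with λ_k(A) > λ_{k+1}(A) and λ_k(Ã) > λ_{k+1}(Ã), and let P and P̃ be the orthogonal projections onto the (unique) dominant k-dimensional invariant subspaces of A and Ã respectively. Suppose ‖A − Ã‖₂ ≤ C·λ_j(A) for some constant C > 0 and some j ≥ k, and suppose λ_k(A) − λ_{k+1}(A) − C·λ_j(A) > 0. Then ‖P − P̃‖₂ ≤ C·λ_j(A) / (λ_k(A) − λ_{k+1}(A) − C·λ_j(A)). -/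
open Matrix
open scoped Matrix.Norms.L2Operator

/-! The Davis–Kahan argument. Write `P`, `Q` for the spectral projections of `A`, `A'` onto their
top `k` eigenvectors and `ε = ‖A - A'‖`. The Sylvester identity
`A X - X A' = (1 - P) (A - A') Q` for `X = (1 - P) Q`, with `‖A X‖ ≤ λ_{k+1} ‖X‖` and
`‖X A'‖ ≥ (λ_k - ε) ‖X‖` (Weyl), gives `‖(1 - P) Q‖ ≤ ε / (λ_k - λ_{k+1} - ε)`; positivity of `A`
is what bounds `‖A (1 - P)‖` by `λ_{k+1}`. Exchanging the roles of `A` and `A'` bounds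
`‖(1 - Q) P‖` in the same way, and for two orthogonal projections
`‖P - Q‖ ≤ max (‖P (1 - Q)‖, ‖(1 - P) Q‖)` by Pythagoras. -/

theorem sub_mul_norm_one_sub_mul_le {R : Type*} [NormedRing R] {m n p q r : R} {α β : ℝ}
    (hmp : Commute m p) (hnq : Commute n q) (hp : IsIdempotentElem p) (hq : IsIdempotentElem q)
    (hp₁ : ‖1 - p‖ ≤ 1) (hq₁ : ‖q‖ ≤ 1) (hm : ‖m * (1 - p)‖ ≤ α)
    (hnr : n * r = q) (hβ : 0 ≤ β) (hr : β * ‖r‖ ≤ 1) :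
    (β - α) * ‖(1 - p) * q‖ ≤ ‖m - n‖ := by
  set x := (1 - p) * q
  have hm₁ : m * (1 - p) = (1 - p) * m := ((Commute.one_right m).sub_right hmp).eq
  have hsylvester : m * x - x * n = (1 - p) * (m - n) * q :=
    calc m * x - x * n = (1 - p) * m * q - (1 - p) * (q * n) := by
          simp only [x, ← mul_assoc, hm₁]
      _ = (1 - p) * (m - n) * q := by rw [← hnq.eq]; noncomm_ring
  have hmx : ‖m * x‖ ≤ α * ‖x‖ := by
    have hx : (1 - p) * x = x := by
      change (1 - p) * ((1 - p) * q) = (1 - p) * q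
      rw [← mul_assoc, hp.one_sub.eq]
    calc ‖m * x‖ = ‖m * (1 - p) * x‖ := by rw [mul_assoc, hx]
      _ ≤ ‖m * (1 - p)‖ * ‖x‖ := norm_mul_le _ _
      _ ≤ α * ‖x‖ := by gcongr
  have hxn : β * ‖x‖ ≤ ‖x * n‖ := by
    have hx : x = x * n * r := by rw [mul_assoc, hnr, mul_assoc, hq.eq]
    calc β * ‖x‖ = β * ‖x * n * r‖ := by rw [← hx]
      _ ≤ β * (‖x * n‖ * ‖r‖) := by gcongr; exact norm_mul_le _ _
      _ = ‖x * n‖ * (β * ‖r‖) := by ring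
      _ ≤ ‖x * n‖ := mul_le_of_le_one_right (norm_nonneg _) hr
  have hres : ‖(1 - p) * (m - n) * q‖ ≤ ‖m - n‖ :=
    calc ‖(1 - p) * (m - n) * q‖ ≤ ‖1 - p‖ * ‖m - n‖ * ‖q‖ := norm_mul₃_le
      _ ≤ 1 * ‖m - n‖ * 1 := by gcongr
      _ = ‖m - n‖ := by ring
  have := norm_sub_norm_le (x * n) (m * x)
  rw [norm_sub_rev, hsylvester] at this
  linarith

theorem ContinuousLinearMap.norm_sub_le_of_isStarProjection {𝕜 E : Type*} [RCLike 𝕜]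
    [NormedAddCommGroup E] [InnerProductSpace 𝕜 E] [CompleteSpace E] {p q : E →L[𝕜] E}
    (hp : IsStarProjection p) (hq : IsStarProjection q) {c : ℝ}
    (h₁ : ‖p * (1 - q)‖ ≤ c) (h₂ : ‖(1 - p) * q‖ ≤ c) : ‖p - q‖ ≤ c := by
  have horth {r : E →L[𝕜] E} (hr : IsStarProjection r) (a b : E) :
      inner 𝕜 (r a) ((1 - r) b) = 0 := by
    rw [← adjoint_inner_right, ← star_eq_adjoint, hr.isSelfAdjoint.star_eq, ← mul_apply_eq_comp,
      hr.mul_one_sub_self, _root_.zero_apply, inner_zero_right]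
  refine opNorm_le_bound _ ((norm_nonneg _).trans h₁) fun x => ?_
  set u := (1 - q) x
  set v := q x
  have hsplit : (p - q) x = (p * (1 - q)) u + -(((1 - p) * q) v) := by
    have : p - q = p * (1 - q) * (1 - q) - (1 - p) * q * q := by
      rw [mul_assoc, hq.one_sub.isIdempotentElem.eq, mul_assoc, hq.isIdempotentElem.eq]
      noncomm_ring
    rw [this, _root_.sub_apply, mul_apply_eq_comp (p * (1 - q)), mul_apply_eq_comp ((1 - p) * q),
      sub_eq_add_neg]
  have hpq : ‖(p - q) x‖ * ‖(p - q) x‖ =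
      ‖(p * (1 - q)) u‖ * ‖(p * (1 - q)) u‖ + ‖((1 - p) * q) v‖ * ‖((1 - p) * q) v‖ := by
    rw [hsplit, norm_add_sq_eq_norm_sq_add_norm_sq_of_inner_eq_zero (𝕜 := 𝕜), norm_neg]
    rw [inner_neg_right, mul_apply_eq_comp, mul_apply_eq_comp, horth hp, neg_zero]
  have hx : ‖x‖ * ‖x‖ = ‖u‖ * ‖u‖ + ‖v‖ * ‖v‖ := by
    have := horth hq.one_sub x x
    rw [sub_sub_cancel] at this
    rw [← norm_add_sq_eq_norm_sq_add_norm_sq_of_inner_eq_zero _ _ this, _root_.sub_apply,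
      one_apply_eq_self, sub_add_cancel]
  have hu := mul_self_le_mul_self (norm_nonneg _) (le_of_opNorm_le _ h₁ u)
  have hv := mul_self_le_mul_self (norm_nonneg _) (le_of_opNorm_le _ h₂ v)
  refine (mul_self_le_mul_self_iff (norm_nonneg _)
    (mul_nonneg ((norm_nonneg _).trans h₁) (norm_nonneg x))).mpr ?_
  calc ‖(p - q) x‖ * ‖(p - q) x‖ = _ := hpq
    _ ≤ c * ‖u‖ * (c * ‖u‖) + c * ‖v‖ * (c * ‖v‖) := add_le_add hu hv
    _ = c * ‖x‖ * (c * ‖x‖) := by linear_combination (-(c * c)) * hx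

theorem Matrix.l2_opNorm_sub_le_of_isStarProjection {𝕜 ι : Type*} [RCLike 𝕜] [Fintype ι]
    [DecidableEq ι] {P Q : Matrix ι ι 𝕜} (hP : IsStarProjection P) (hQ : IsStarProjection Q)
    {c : ℝ} (h₁ : ‖P * (1 - Q)‖ ≤ c) (h₂ : ‖(1 - P) * Q‖ ≤ c) : ‖P - Q‖ ≤ c := by
  simp only [cstar_norm_def, map_sub, map_mul, map_one] at h₁ h₂ ⊢
  exact ContinuousLinearMap.norm_sub_le_of_isStarProjection (hP.map toEuclideanCLM)
    (hQ.map toEuclideanCLM) h₁ h₂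

theorem Matrix.dotProduct_mulVec_le_l2_opNorm {ι : Type*} [Fintype ι] [DecidableEq ι]
    (M : Matrix ι ι ℝ) (x : ι → ℝ) : x ⬝ᵥ M *ᵥ x ≤ ‖M‖ * (x ⬝ᵥ x) := by
  let y : EuclideanSpace ℝ ι := WithLp.toLp 2 x
  have hy : ‖y‖ * ‖y‖ = x ⬝ᵥ x := by
    rw [← real_inner_self_eq_norm_mul_norm, EuclideanSpace.inner_eq_star_dotProduct]
    simp [y]
  calc x ⬝ᵥ M *ᵥ x = inner ℝ y (toEuclideanCLM (𝕜 := ℝ) M y) :=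
        (inner_toEuclideanCLM M y y).symm
    _ ≤ ‖y‖ * ‖toEuclideanCLM (𝕜 := ℝ) M y‖ := real_inner_le_norm _ _
    _ ≤ ‖y‖ * (‖M‖ * ‖y‖) := by gcongr; exact (toEuclideanCLM (𝕜 := ℝ) M).le_opNorm y
    _ = ‖M‖ * (x ⬝ᵥ x) := by rw [← hy]; ring

theorem Matrix.submatrix_mul_transpose_submatrix_of_injective {ι κ α : Type*} [Fintype ι]
    [DecidableEq ι] [Fintype κ] [Semiring α] (U : Matrix ι ι α) {e : κ → ι}
    (he : Function.Injective e) :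
    U.submatrix id e * (U.submatrix id e)ᵀ = U * diagonal ((Set.range e).indicator 1) * Uᵀ := by
  ext i j
  rw [mul_apply, mul_apply]
  apply Fintype.sum_of_injective e he
  · intro t ht
    simp [ht]
  · simp

theorem Matrix.exists_ne_zero_mulVec_apply_eq_zero {ι K : Type*} [Fintype ι] [LinearOrder ι]
    [Field K] (U V : Matrix ι ι K) (a : ι) :
    ∃ x ≠ 0, (∀ i, a < i → (U *ᵥ x) i = 0) ∧ (∀ i, i < a → (V *ᵥ x) i = 0) := by
  -- the constraints fill all rows but row `a`, so they form a singular square matrix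
  let W : Matrix ι ι K := of fun i => if i < a then V i else if a < i then U i else 0
  obtain ⟨x, hx₀, hWx⟩ := exists_mulVec_eq_zero_iff.mpr
    (det_eq_zero_of_row_eq_zero (A := W) a fun j => by simp [W])
  refine ⟨x, hx₀, fun i hi => ?_, fun i hi => ?_⟩
  · simpa [W, mulVec, hi, hi.not_gt] using congrFun hWx i
  · simpa [W, mulVec, hi] using congrFun hWx i

section conjDiag

variable {ι : Type*} [Fintype ι] [DecidableEq ι]

def Matrix.diagonalStarAlgHom (R : Type*) [CommSemiring R] [StarRing R] :
    (ι → R) →⋆ₐ[R] Matrix ι ι R :=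
  { diagonalAlgHom R with map_star' := fun v => (diagonal_conjTranspose v).symm }

noncomputable def conjDiag (U : unitary (Matrix ι ι ℝ)) : (ι → ℝ) →⋆ₐ[ℝ] Matrix ι ι ℝ :=
  (Unitary.conjStarAlgAut ℝ _ U : Matrix ι ι ℝ →⋆ₐ[ℝ] Matrix ι ι ℝ).comp (diagonalStarAlgHom ℝ)

theorem conjDiag_apply (U : unitary (Matrix ι ι ℝ)) (f : ι → ℝ) :
    conjDiag U f = (U : Matrix ι ι ℝ) * diagonal f * (U : Matrix ι ι ℝ)ᵀ := rfl

theorem norm_conjDiag (U : unitary (Matrix ι ι ℝ)) (f : ι → ℝ) : ‖conjDiag U f‖ = ‖f‖ := by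
  rw [conjDiag_apply, ← conjTranspose_eq_transpose_of_trivial, ← star_eq_conjTranspose,
    ← Unitary.coe_star, CStarRing.norm_mul_coe_unitary, CStarRing.norm_coe_unitary_mul,
    l2_opNorm_diagonal]

open Polynomial in
theorem charpoly_conjDiag (U : unitary (Matrix ι ι ℝ)) (f : ι → ℝ) :
    (conjDiag U f).charpoly = ∏ i, (X - C (f i)) := by
  rw [conjDiag_apply, charpoly_mul_comm, ← mul_assoc,
    show (U : Matrix ι ι ℝ)ᵀ * U = 1 from Unitary.star_mul_self_of_mem U.2, one_mul,
    charpoly_diagonal]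

theorem dotProduct_conjDiag_mulVec (U : unitary (Matrix ι ι ℝ)) (f x : ι → ℝ) :
    x ⬝ᵥ conjDiag U f *ᵥ x = ∑ i, f i * (star (U : Matrix ι ι ℝ) *ᵥ x) i ^ 2 := by
  rw [conjDiag_apply, ← mulVec_mulVec, ← mulVec_mulVec, dotProduct_mulVec, ← mulVec_transpose]
  simp only [dotProduct, mulVec_diagonal, star_eq_conjTranspose,
    conjTranspose_eq_transpose_of_trivial]
  exact Finset.sum_congr rfl fun i _ => by ring

theorem sum_sq_star_mulVec (U : unitary (Matrix ι ι ℝ)) (x : ι → ℝ) :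
    ∑ i, (star (U : Matrix ι ι ℝ) *ᵥ x) i ^ 2 = x ⬝ᵥ x := by
  simpa using (dotProduct_conjDiag_mulVec U 1 x).symm

theorem isStarProjection_conjDiag_indicator (U : unitary (Matrix ι ι ℝ)) (S : Set ι) :
    IsStarProjection (conjDiag U (S.indicator 1)) :=
  IsStarProjection.map (f := conjDiag U)
    ⟨by ext i; by_cases h : i ∈ S <;> simp [h], IsSelfAdjoint.all _⟩

theorem sin_theta_conjDiag (U V : unitary (Matrix ι ι ℝ)) {f g : ι → ℝ} {S : Set ι} {α β : ℝ}
    (hα : 0 ≤ α) (hβ : 0 < β) (hf : ∀ i ∉ S, |f i| ≤ α) (hg : ∀ i ∈ S, β ≤ g i) :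
    (β - α) * ‖(1 - conjDiag U (S.indicator 1)) * conjDiag V (S.indicator 1)‖ ≤
      ‖conjDiag U f - conjDiag V g‖ := by
  have hP := isStarProjection_conjDiag_indicator U S
  have hQ := isStarProjection_conjDiag_indicator V S
  refine sub_mul_norm_one_sub_mul_le ((Commute.all f _).map (conjDiag U))
    ((Commute.all g _).map (conjDiag V)) hP.isIdempotentElem hQ.isIdempotentElem
    hP.one_sub.norm_le hQ.norm_le ?_ (r := conjDiag V (S.indicator g⁻¹)) ?_ hβ.le ?_
  · rw [← map_one (conjDiag U), ← map_sub, ← map_mul, norm_conjDiag,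
      pi_norm_le_iff_of_nonneg hα]
    intro i
    by_cases h : i ∈ S <;> simp [h, hα, hf]
  · rw [← map_mul]
    congr 1
    ext i
    by_cases h : i ∈ S
    · simp [h, (hβ.trans_le (hg i h)).ne']
    · simp [h]
  · rw [norm_conjDiag, ← le_div_iff₀' hβ, one_div, pi_norm_le_iff_of_nonneg (by positivity)]
    intro i
    by_cases h : i ∈ S
    · simpa [h, abs_of_pos (hβ.trans_le (hg i h))] using inv_anti₀ hβ (hg i h)
    · simp [h, hβ.le]

theorem norm_conjDiag_indicator_sub_le (U V : unitary (Matrix ι ι ℝ)) {f g : ι → ℝ} {S : Set ι}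
    {α β ε : ℝ} (hα : 0 ≤ α) (hfS : ∀ i ∈ S, β ≤ f i) (hfSc : ∀ i ∉ S, |f i| ≤ α)
    (hgS : ∀ i ∈ S, β - ε ≤ g i) (hgSc : ∀ i ∉ S, |g i| ≤ α + ε)
    (hε : ‖conjDiag U f - conjDiag V g‖ ≤ ε) (hgap : 0 < β - α - ε) :
    ‖conjDiag U (S.indicator 1) - conjDiag V (S.indicator 1)‖ ≤ ε / (β - α - ε) := by
  have hP := isStarProjection_conjDiag_indicator U S
  have hQ := isStarProjection_conjDiag_indicator V S
  have hε₀ : 0 ≤ ε := (norm_nonneg _).trans hε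
  have h₁ := (sin_theta_conjDiag U V hα (by linarith) hfSc hgS).trans hε
  have h₂ := (sin_theta_conjDiag V U (by linarith) (by linarith) hgSc hfS).trans
    ((norm_sub_rev _ _).trans_le hε)
  refine l2_opNorm_sub_le_of_isStarProjection hP hQ ?_ ?_
  · rw [← hQ.one_sub.isSelfAdjoint.star_eq, ← hP.isSelfAdjoint.star_eq, ← star_mul, norm_star,
      le_div_iff₀ hgap]
    linarith
  · rw [le_div_iff₀ hgap]
    linarith

end conjDiag

section weyl

variable {ι : Type*} [Fintype ι] [LinearOrder ι]

/-- Weyl's inequality, tested on a nonzero vector spanned both by the eigenvectors of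
`conjDiag U D` of index `≤ a` and by those of `conjDiag V E` of index `≥ a`. -/
theorem sub_le_norm_conjDiag_sub (U V : unitary (Matrix ι ι ℝ)) {D E : ι → ℝ}
    (hD : Antitone D) (hE : Antitone E) (a : ι) :
    D a - E a ≤ ‖conjDiag U D - conjDiag V E‖ := by
  obtain ⟨x, hx₀, hUx, hVx⟩ := exists_ne_zero_mulVec_apply_eq_zero (star (U : Matrix ι ι ℝ))
    (star (V : Matrix ι ι ℝ)) a
  have hxx : 0 < x ⬝ᵥ x := by simpa using dotProduct_self_star_pos_iff.mpr hx₀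
  have hlow : D a * (x ⬝ᵥ x) ≤ x ⬝ᵥ conjDiag U D *ᵥ x := by
    rw [dotProduct_conjDiag_mulVec, ← sum_sq_star_mulVec U, Finset.mul_sum]
    refine Finset.sum_le_sum fun i _ => ?_
    rcases le_or_gt i a with h | h
    · exact mul_le_mul_of_nonneg_right (hD h) (sq_nonneg _)
    · simp [hUx i h]
  have hup : x ⬝ᵥ conjDiag V E *ᵥ x ≤ E a * (x ⬝ᵥ x) := by
    rw [dotProduct_conjDiag_mulVec, ← sum_sq_star_mulVec V, Finset.mul_sum]
    refine Finset.sum_le_sum fun i _ => ?_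
    rcases le_or_gt a i with h | h
    · exact mul_le_mul_of_nonneg_right (hE h) (sq_nonneg _)
    · simp [hVx i h]
  have hpert := dotProduct_mulVec_le_l2_opNorm (conjDiag U D - conjDiag V E) x
  rw [sub_mulVec, dotProduct_sub] at hpert
  exact le_of_mul_le_mul_right (by linarith) hxx

theorem abs_sub_le_norm_conjDiag_sub (U V : unitary (Matrix ι ι ℝ)) {D E : ι → ℝ}
    (hD : Antitone D) (hE : Antitone E) (a : ι) :
    |D a - E a| ≤ ‖conjDiag U D - conjDiag V E‖ :=
  abs_sub_le_iff.mpr ⟨sub_le_norm_conjDiag_sub U V hD hE a, by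
    rw [norm_sub_rev]; exact sub_le_norm_conjDiag_sub V U hE hD a⟩

end weyl

open Polynomial in
theorem eigvalsDesc_conjDiag {n : ℕ} (U : unitary (Matrix (Fin n) (Fin n) ℝ)) {D : Fin n → ℝ}
    (hD : Antitone D) {i : ℕ} (hi : i < n) : eigvalsDesc (conjDiag U D) i = D ⟨i, hi⟩ := by
  have hH : (conjDiag U D).IsHermitian := (IsSelfAdjoint.all D).map (conjDiag U)
  have hroots : (List.ofFn D : Multiset ℝ) = List.ofFn hH.eigenvalues := by
    simpa [roots_prod, Finset.prod_ne_zero_iff, X_sub_C_ne_zero] using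
      congrArg roots ((charpoly_conjDiag U D).symm.trans hH.charpoly_eq)
  have hsorted : hH.eigenvalues ∘ Tuple.sort hH.eigenvalues = D ∘ Fin.rev := by
    refine List.ofFn_injective (List.Perm.eq_of_sortedLE (Tuple.monotone_sort _).sortedLE_ofFn
      (Antitone.comp hD Fin.rev_anti).sortedLE_ofFn ?_)
    exact ((Tuple.sort _).ofFn_comp_perm _).trans
      ((Multiset.coe_eq_coe.mp hroots).symm.trans (Fin.revPerm.ofFn_comp_perm D).symm)
  unfold eigvalsDesc
  rw [dif_pos ⟨hH, hi⟩]
  simpa using congrFun hsorted (Fin.rev ⟨i, hi⟩)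

theorem Matrix.PosSemidef.eigvalsDesc_nonneg {n : ℕ} {A : Matrix (Fin n) (Fin n) ℝ}
    (hA : A.PosSemidef) (i : ℕ) : 0 ≤ eigvalsDesc A i := by
  unfold eigvalsDesc
  split_ifs
  exacts [hA.eigenvalues_nonneg _, le_rfl]

theorem davis_kahan_dominant_subspace_bound_general {n k j : ℕ}
    (hkj : k ≤ j) (hjn : j ≤ n)
    (A A' : Matrix (Fin n) (Fin n) ℝ) (hA : A.PosSemidef) (hA' : A'.PosSemidef)
    (U V : Matrix (Fin n) (Fin n) ℝ) (D E : Fin n → ℝ)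
    (hU : Uᵀ * U = 1) (hV : Vᵀ * V = 1) (hD : Antitone D) (hE : Antitone E)
    (hAeig : A = U * Matrix.diagonal D * Uᵀ)
    (hA'eig : A' = V * Matrix.diagonal E * Vᵀ)
    (P Q : Matrix (Fin n) (Fin n) ℝ)
    (hP : P = (U.submatrix id (Fin.castLE (hkj.trans hjn))) *
        (U.submatrix id (Fin.castLE (hkj.trans hjn)))ᵀ)
    (hQ : Q = (V.submatrix id (Fin.castLE (hkj.trans hjn))) *
        (V.submatrix id (Fin.castLE (hkj.trans hjn)))ᵀ)
    (C : ℝ)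
    (hclose : ‖A - A'‖ ≤ C * eigvalsDesc A (j - 1))
    (hgap : 0 < eigvalsDesc A (k - 1) - eigvalsDesc A k - C * eigvalsDesc A (j - 1)) :
    ‖P - Q‖ ≤ C * eigvalsDesc A (j - 1) /
      (eigvalsDesc A (k - 1) - eigvalsDesc A k - C * eigvalsDesc A (j - 1)) := by
  have hkn := hkj.trans hjn
  lift U to unitary (Matrix (Fin n) (Fin n) ℝ) using
    Matrix.mem_unitaryGroup_iff'.mpr (by simpa [star_eq_conjTranspose] using hU)
  lift V to unitary (Matrix (Fin n) (Fin n) ℝ) using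
    Matrix.mem_unitaryGroup_iff'.mpr (by simpa [star_eq_conjTranspose] using hV)
  rw [← conjDiag_apply] at hAeig hA'eig
  rw [submatrix_mul_transpose_submatrix_of_injective _ (Fin.castLE_injective hkn),
    Fin.range_castLE, ← conjDiag_apply] at hP hQ
  have hDeig (i : Fin n) : eigvalsDesc A i = D i := hAeig ▸ eigvalsDesc_conjDiag U hD i.2
  have hEeig (i : Fin n) : eigvalsDesc A' i = E i := hA'eig ▸ eigvalsDesc_conjDiag V hE i.2
  have hD₀ (i : Fin n) : 0 ≤ D i := hDeig i ▸ hA.eigvalsDesc_nonneg i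
  have hE₀ (i : Fin n) : 0 ≤ E i := hEeig i ▸ hA'.eigvalsDesc_nonneg i
  have hε : ‖conjDiag U D - conjDiag V E‖ ≤ C * eigvalsDesc A (j - 1) := by
    rwa [← hAeig, ← hA'eig]
  have hweyl (i : Fin n) := abs_le.mp ((abs_sub_le_norm_conjDiag_sub U V hD hE i).trans hε)
  have hhead (i : Fin n) (hi : (i : ℕ) < k) : eigvalsDesc A (k - 1) ≤ D i :=
    hDeig ⟨k - 1, by omega⟩ ▸ hD (Fin.le_def.mpr (show (i : ℕ) ≤ k - 1 by omega))
  have htail (i : Fin n) (hi : ¬ (i : ℕ) < k) : D i ≤ eigvalsDesc A k :=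
    hDeig ⟨k, by omega⟩ ▸ hD (Fin.le_def.mpr (show k ≤ (i : ℕ) by omega))
  rw [hP, hQ]
  refine norm_conjDiag_indicator_sub_le U V (hA.eigvalsDesc_nonneg k) hhead
    (fun i hi => (abs_of_nonneg (hD₀ i)).trans_le (htail i hi)) (fun i hi => ?_) (fun i hi => ?_)
    hε hgap
  · linarith [hhead i hi, (hweyl i).2]
  · rw [abs_of_nonneg (hE₀ i)]
    linarith [htail i hi, (hweyl i).1]

/-- consequence of the Davis–Kahan sin Θ theorem. `A` and `A'` are PSD
with eigendecompositions `A = U (diagonal D) Uᵗ`, `A' = V (diagonal E) Vᵗ` (eigenvalues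
nonincreasing), both having eigengaps `λ_k > λ_{k+1}`, so the dominant `k`-dimensional
invariant subspaces are unique with orthogonal projections `P = U₁ U₁ᵗ` and `Q = V₁ V₁ᵗ`
(`U₁`, `V₁` the first `k` eigenvector columns).  If `‖A − A'‖₂ ≤ C λ_j(A)` for some `C > 0`
and `j ≥ k`, and `λ_k(A) − λ_{k+1}(A) − C λ_j(A) > 0`, then
`‖P − Q‖₂ ≤ C λ_j(A) / (λ_k(A) − λ_{k+1}(A) − C λ_j(A))`. -/
theorem davis_kahan_dominant_subspace_bound {n k j : ℕ}
    (hk1 : 1 ≤ k) (hkj : k ≤ j) (hjn : j ≤ n)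
    (A A' : Matrix (Fin n) (Fin n) ℝ) (hA : A.PosSemidef) (hA' : A'.PosSemidef)
    (U V : Matrix (Fin n) (Fin n) ℝ) (D E : Fin n → ℝ)
    (hU : Uᵀ * U = 1) (hV : Vᵀ * V = 1) (hD : Antitone D) (hE : Antitone E)
    (hAeig : A = U * Matrix.diagonal D * Uᵀ)
    (hA'eig : A' = V * Matrix.diagonal E * Vᵀ)
    (hgapA : eigvalsDesc A k < eigvalsDesc A (k - 1))
    (hgapA' : eigvalsDesc A' k < eigvalsDesc A' (k - 1))
    (P Q : Matrix (Fin n) (Fin n) ℝ)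
    (hP : P = (U.submatrix id (Fin.castLE (hkj.trans hjn))) *
        (U.submatrix id (Fin.castLE (hkj.trans hjn)))ᵀ)
    (hQ : Q = (V.submatrix id (Fin.castLE (hkj.trans hjn))) *
        (V.submatrix id (Fin.castLE (hkj.trans hjn)))ᵀ)
    (C : ℝ) (hC : 0 < C)
    (hclose : ‖A - A'‖ ≤ C * eigvalsDesc A (j - 1))
    (hgap : 0 < eigvalsDesc A (k - 1) - eigvalsDesc A k - C * eigvalsDesc A (j - 1)) :
    ‖P - Q‖ ≤ C * eigvalsDesc A (j - 1) /
      (eigvalsDesc A (k - 1) - eigvalsDesc A k - C * eigvalsDesc A (j - 1)) :=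
  davis_kahan_dominant_subspace_bound_general hkj hjn A A' hA hA' U V D E hU hV hD hE hAeig hA'eig P
    Q hP hQ C hclose hgap
end
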